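/- arXiv:2107.09819 — 6 statements merged into one kernel-verified Lean document; each statement's English description precedes it below -/
import Mathlib

section
/- Let T be a bounded self-adjoint operator on a Hilbert space H. Then for each unit vector x in H, the operator norm of the commutator [T, x⊗x] equals ‖(T − ⟨Tx,x⟩)x‖, where x⊗x denotes the rank-one projection y ↦ ⟨y,x⟩x. -/
open InnerProductSpace

theorem stmt0 {H : Type*} [NormedAddCommGroup H] [InnerProductSpace ℂ H] [CompleteSpace H]
    (T : H →L[ℂ] H) (hT : IsSelfAdjoint T) (x : H) (hx : ‖x‖ = 1) :
    ‖T ∘L ((innerSL ℂ x).smulRight x) - ((innerSL ℂ x).smulRight x) ∘L T‖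
      = ‖T x - (inner ℂ x (T x) : ℂ) • x‖ := by
  set μ : ℂ := inner ℂ x (T x) with hμ
  set v : H := T x - μ • x with hv
  have hsym := hT.isSymmetric
  have hxx : (inner ℂ x x : ℂ) = 1 := by
    rw [inner_self_eq_norm_sq_to_K, hx]; norm_num
  have hμreal : (starRingEnd ℂ) μ = μ := by
    rw [hμ, inner_conj_symm]; exact hsym x x
  have hxv : (inner ℂ x v : ℂ) = 0 := by
    simp [hv, inner_sub_right, inner_smul_right, hxx, hμ, hx]
  have hvx : (inner ℂ v x : ℂ) = 0 := by
    rw [← inner_conj_symm, hxv, map_zero]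
  set C := T ∘L ((innerSL ℂ x).smulRight x) - ((innerSL ℂ x).smulRight x) ∘L T with hC
  have hCapply : ∀ z : H, C z = (inner ℂ x z : ℂ) • v - (inner ℂ v z : ℂ) • x := by
    intro z
    have h1 : (inner ℂ v z : ℂ) = inner ℂ (T x) z - μ * inner ℂ x z := by
      simp [hv, inner_sub_left, inner_smul_left, hμreal, mul_comm]
    have h2 : (inner ℂ x (T z) : ℂ) = inner ℂ (T x) z := (hsym x z).symm
    simp only [hC, ContinuousLinearMap.sub_apply, ContinuousLinearMap.comp_apply,
      ContinuousLinearMap.smulRight_apply, innerSL_apply_apply, map_smul, h1, h2, hv]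
    simp only [inner_sub_left, inner_smul_left, hμreal]
    module
  have hCx : C x = v := by rw [hCapply x, hxx, hvx]; simp
  apply le_antisymm
  · apply ContinuousLinearMap.opNorm_le_bound _ (norm_nonneg v)
    intro z
    rw [hCapply z]
    set z' : H := z - (inner ℂ x z : ℂ) • x with hz'
    have hvz : (inner ℂ v z : ℂ) = inner ℂ v z' := by
      simp [hz', inner_sub_right, inner_smul_right, hvx]
    have hxz' : (inner ℂ x z' : ℂ) = 0 := by
      simp [hz', inner_sub_right, inner_smul_right, hxx, hx]
    have hpyth : ‖z‖ * ‖z‖ = ‖(inner ℂ x z : ℂ) • x‖ * ‖(inner ℂ x z : ℂ) • x‖ + ‖z'‖ * ‖z'‖ := by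
      have h0 : (inner ℂ ((inner ℂ x z : ℂ) • x) z' : ℂ) = 0 := by
        rw [inner_smul_left, hxz', mul_zero]
      have := norm_add_sq_eq_norm_sq_add_norm_sq_of_inner_eq_zero _ _ h0
      rwa [show (inner ℂ x z : ℂ) • x + z' = z by rw [hz']; abel] at this
    have h0' : (inner ℂ ((inner ℂ x z : ℂ) • v) ((inner ℂ v z : ℂ) • x) : ℂ) = 0 := by
      rw [inner_smul_left, inner_smul_right, hvx]; ring
    have hpyth2 : ‖(inner ℂ x z : ℂ) • v - (inner ℂ v z : ℂ) • x‖ *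
        ‖(inner ℂ x z : ℂ) • v - (inner ℂ v z : ℂ) • x‖
        = ‖(inner ℂ x z : ℂ) • v‖ * ‖(inner ℂ x z : ℂ) • v‖
          + ‖(inner ℂ v z : ℂ) • x‖ * ‖(inner ℂ v z : ℂ) • x‖ := by
      have h0'' : (inner ℂ ((inner ℂ x z : ℂ) • v) (-((inner ℂ v z : ℂ) • x)) : ℂ) = 0 := by
        rw [inner_neg_right, h0', neg_zero]
      have := norm_add_sq_eq_norm_sq_add_norm_sq_of_inner_eq_zero _ _ h0''
      simpa [sub_eq_add_neg] using this
    have hcs : ‖(inner ℂ v z' : ℂ)‖ ≤ ‖v‖ * ‖z'‖ := norm_inner_le_norm v z'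
    have key : ‖(inner ℂ x z : ℂ) • v - (inner ℂ v z : ℂ) • x‖ *
        ‖(inner ℂ x z : ℂ) • v - (inner ℂ v z : ℂ) • x‖ ≤ (‖v‖ * ‖z‖) * (‖v‖ * ‖z‖) := by
      rw [hpyth2, norm_smul, norm_smul, hx, mul_one, hvz]
      have hpyth' : ‖z‖ * ‖z‖ = ‖(inner ℂ x z : ℂ)‖ * ‖(inner ℂ x z : ℂ)‖ + ‖z'‖ * ‖z'‖ := by
        rw [hpyth, norm_smul, hx, mul_one]
      have hcs2 : ‖(inner ℂ v z' : ℂ)‖ * ‖(inner ℂ v z' : ℂ)‖ ≤ (‖v‖ * ‖z'‖) * (‖v‖ * ‖z'‖) :=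
        mul_self_le_mul_self (norm_nonneg _) hcs
      nlinarith [hcs2, hpyth', mul_self_nonneg ‖v‖, norm_nonneg v, norm_nonneg z']
    nlinarith [norm_nonneg ((inner ℂ x z : ℂ) • v - (inner ℂ v z : ℂ) • x),
      mul_nonneg (norm_nonneg v) (norm_nonneg z)]
  · calc ‖T x - μ • x‖ = ‖C x‖ := by rw [hCx, hv]
      _ ≤ ‖C‖ * ‖x‖ := C.le_opNorm x
      _ = ‖C‖ := by rw [hx, mul_one]
end

section
/- Let T be a bounded self-adjoint operator on a Hilbert space H. Then for every pair of unit vectors x, y ∈ H, |⟨Tx,x⟩ − ⟨Ty,y⟩| ≤ ‖[T, x⊗y]‖ + ‖[T, x⊗x]‖ + ‖[T, y⊗y]‖. -/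
open InnerProductSpace

theorem stmt1 {H : Type*} [NormedAddCommGroup H] [InnerProductSpace ℂ H] [CompleteSpace H]
    (T : H →L[ℂ] H) (hT : IsSelfAdjoint T) (x y : H) (hx : ‖x‖ = 1) (hy : ‖y‖ = 1) :
    ‖(inner ℂ x (T x) : ℂ) - (inner ℂ y (T y) : ℂ)‖
      ≤ ‖T ∘L ((innerSL ℂ y).smulRight x) - ((innerSL ℂ y).smulRight x) ∘L T‖
        + ‖T ∘L ((innerSL ℂ x).smulRight x) - ((innerSL ℂ x).smulRight x) ∘L T‖
        + ‖T ∘L ((innerSL ℂ y).smulRight y) - ((innerSL ℂ y).smulRight y) ∘L T‖ := by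
  set C := T ∘L ((innerSL ℂ y).smulRight x) - ((innerSL ℂ y).smulRight x) ∘L T with hC
  have hyy : (inner ℂ y y : ℂ) = 1 := by
    rw [inner_self_eq_norm_sq_to_K, hy]; norm_num
  have hxx : (inner ℂ x x : ℂ) = 1 := by
    rw [inner_self_eq_norm_sq_to_K, hx]; norm_num
  have hCy : C y = T x - (inner ℂ y (T y) : ℂ) • x := by
    simp [hC, ContinuousLinearMap.sub_apply, ContinuousLinearMap.comp_apply,
      ContinuousLinearMap.smulRight_apply, innerSL_apply_apply, hyy, hy]
  have key : (inner ℂ x (T x) : ℂ) - (inner ℂ y (T y) : ℂ) = inner ℂ x (C y) := by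
    rw [hCy, inner_sub_right, inner_smul_right, hxx, mul_one]
  rw [key]
  calc ‖(inner ℂ x (C y) : ℂ)‖ ≤ ‖x‖ * ‖C y‖ := norm_inner_le_norm _ _
    _ ≤ 1 * (‖C‖ * ‖y‖) := by
        rw [hx]; gcongr; exact C.le_opNorm y
    _ = ‖C‖ := by rw [hy]; ring
    _ ≤ _ := by
        have h1 : (0:ℝ) ≤ ‖T ∘L ((innerSL ℂ x).smulRight x) - ((innerSL ℂ x).smulRight x) ∘L T‖ := norm_nonneg _
        have h2 : (0:ℝ) ≤ ‖T ∘L ((innerSL ℂ y).smulRight y) - ((innerSL ℂ y).smulRight y) ∘L T‖ := norm_nonneg _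
        linarith
end

section
/- Suppose U is a connected open set in ℂⁿ that is symmetric with respect to coordinatewise complex conjugation (i.e., (w₁,…,wₙ) ∈ U iff (conj w₁,…,conj wₙ) ∈ U). Let F be an analytic (holomorphic) function on U × U ⊆ ℂⁿ × ℂⁿ. If F(conj z, z) = 0 for every z ∈ U (where conj z denotes coordinatewise conjugation), then F is identically zero on U × U. -/
open Complex Metric Filter Topology

/-- A function analytic on a polydisc that vanishes at all "real" points of the polydisc
vanishes on the whole polydisc. -/
private lemma realSlice {ι : Type*} [Fintype ι] [DecidableEq ι] {r : ℝ}
    {G : (ι → ℂ) → ℂ}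
    (hG : ∀ w : ι → ℂ, (∀ i, ‖w i‖ < r) → AnalyticAt ℂ G w)
    (h0 : ∀ w : ι → ℂ, (∀ i, ‖w i‖ < r) → (∀ i, (w i).im = 0) → G w = 0) :
    ∀ w : ι → ℂ, (∀ i, ‖w i‖ < r) → G w = 0 := by
  suffices H : ∀ s : Finset ι, ∀ w : ι → ℂ, (∀ i, ‖w i‖ < r) →
      (∀ i ∉ s, (w i).im = 0) → G w = 0 by
    intro w hw
    exact H Finset.univ w hw (fun i hi => absurd (Finset.mem_univ i) hi)
  intro s
  induction s using Finset.induction_on with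
  | empty =>
    intro w hw hre
    exact h0 w hw fun i => hre i (Finset.notMem_empty i)
  | @insert k s hk ih =>
    intro w hw hre
    have hr : 0 < r := lt_of_le_of_lt (norm_nonneg _) (hw k)
    set h : ℂ → ℂ := fun t => G (Function.update w k t) with hh
    have hA : AnalyticOnNhd ℂ h (ball (0 : ℂ) r) := by
      intro t ht
      have h1 : AnalyticAt ℂ G (Function.update w k t) := by
        apply hG
        intro i
        rcases eq_or_ne i k with rfl | hik
        · simpa using mem_ball_zero_iff.mp ht
        · simpa [Function.update_of_ne hik] using hw i
      have h2 : AnalyticAt ℂ (fun t : ℂ => Function.update w k t) t := by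
        apply AnalyticAt.pi
        intro i
        rcases eq_or_ne i k with rfl | hik
        · simp only [Function.update_self]; exact analyticAt_id
        · simpa [Function.update_of_ne hik] using analyticAt_const (v := w i)
      exact h1.comp h2
    have hzero : ∀ x : ℝ, ‖(x : ℂ)‖ < r → h x = 0 := by
      intro x hx
      apply ih
      · intro i
        rcases eq_or_ne i k with rfl | hik
        · simpa using hx
        · simpa [Function.update_of_ne hik] using hw i
      · intro i hi
        rcases eq_or_ne i k with rfl | hik
        · simp
        · rw [Function.update_of_ne hik]
          exact hre i (by simp [hik, hi])
    have hfreq : ∃ᶠ t in 𝓝[≠] (0 : ℂ), h t = 0 := by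
      have hseq : Filter.Tendsto (fun j : ℕ => ((r / 2 / (j + 1) : ℝ) : ℂ))
          Filter.atTop (𝓝[≠] (0 : ℂ)) := by
        apply tendsto_nhdsWithin_of_tendsto_nhds_of_eventually_within
        · have : Filter.Tendsto (fun j : ℕ => (r / 2 / (j + 1) : ℝ))
              Filter.atTop (𝓝 0) := by
            apply Filter.Tendsto.div_atTop tendsto_const_nhds
            exact tendsto_atTop_add_const_right _ _ tendsto_natCast_atTop_atTop
          have h2 : Filter.Tendsto (fun j : ℕ => ((r / 2 / (j + 1) : ℝ) : ℂ))
              Filter.atTop (𝓝 ((0 : ℝ) : ℂ)) :=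
            (Complex.continuous_ofReal.tendsto 0).comp this
          rw [Complex.ofReal_zero] at h2
          exact h2
        · filter_upwards with j
          simp only [Set.mem_compl_iff, Set.mem_singleton_iff]
          intro hc
          have hx : (r / 2 / (j + 1) : ℝ) = 0 := by exact_mod_cast hc
          have hp : (0:ℝ) < r / 2 / (j + 1) := by positivity
          linarith
      apply hseq.frequently
      apply Filter.Frequently.of_forall
      intro j
      apply hzero
      have hj : (1 : ℝ) ≤ (j : ℝ) + 1 := by
        have : (0 : ℝ) ≤ (j : ℝ) := Nat.cast_nonneg j
        linarith
      have h1 : (r / 2 / (j + 1) : ℝ) ≤ r / 2 := by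
        rw [div_le_iff₀ (by linarith)]
        nlinarith [hr]
      have h2 : (0 : ℝ) ≤ (r / 2 / (j + 1) : ℝ) := by positivity
      rw [Complex.norm_real]
      rw [Real.norm_eq_abs, _root_.abs_of_nonneg h2]
      linarith
    have := hA.eqOn_zero_of_preconnected_of_frequently_eq_zero
      (convex_ball (0 : ℂ) r).isPreconnected (mem_ball_self hr) hfreq
    have hwk : w k ∈ ball (0 : ℂ) r := mem_ball_zero_iff.mpr (hw k)
    have := this hwk
    simpa [hh, Function.update_eq_self] using this

theorem stmt2 {n : ℕ} (U : Set (Fin n → ℂ)) (hUopen : IsOpen U) (hUconn : IsConnected U)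
    (hUsym : ∀ z : Fin n → ℂ, z ∈ U ↔ (fun i => starRingEnd ℂ (z i)) ∈ U)
    (F : (Fin n → ℂ) × (Fin n → ℂ) → ℂ) (hF : AnalyticOnNhd ℂ F (U ×ˢ U))
    (hF0 : ∀ z ∈ U, F ((fun i => starRingEnd ℂ (z i)), z) = 0) :
    ∀ p ∈ U ×ˢ U, F p = 0 := by
  obtain ⟨z₀, hz₀⟩ := hUconn.nonempty
  set c : Fin n → ℂ := fun i => starRingEnd ℂ (z₀ i) with hc
  have hcU : c ∈ U := (hUsym z₀).mp hz₀
  -- a radius around z₀ inside U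
  obtain ⟨r, hr, hball⟩ := Metric.isOpen_iff.mp hUopen z₀ hz₀
  -- ball around c inside U too
  have hballc : ball c r ⊆ U := by
    intro a ha
    have : (fun i => starRingEnd ℂ (a i)) ∈ ball z₀ r := by
      rw [mem_ball] at ha ⊢
      rcases n.eq_zero_or_pos with hn | hn
      · have : dist (fun i => starRingEnd ℂ (a i)) z₀ = 0 := by
          have : Subsingleton (Fin n → ℂ) := by
            rw [hn]; infer_instance
          simp [Subsingleton.elim (fun i => starRingEnd ℂ (a i)) z₀]
        linarith
      · rw [dist_pi_lt_iff hr] at ha ⊢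
        intro i
        have := ha i
        calc dist (starRingEnd ℂ (a i)) (z₀ i)
            = dist (starRingEnd ℂ (a i)) (starRingEnd ℂ (c i)) := by
              simp [hc, Complex.conj_conj]
          _ = dist (a i) (c i) := by
              simp [Complex.dist_eq, ← map_sub, Complex.norm_conj]
          _ < r := this
    have := hball this
    have := (hUsym a).mpr
    apply this
    convert hball ‹(fun i => starRingEnd ℂ (a i)) ∈ ball z₀ r›
  set r' : ℝ := r / 3 with hr'
  have hr'pos : 0 < r' := by positivity
  -- the transformed function G on ℂ^(n ⊕ n)
  set L₁ : (Fin n ⊕ Fin n → ℂ) →L[ℂ] (Fin n → ℂ) :=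
    ContinuousLinearMap.pi fun i =>
      ContinuousLinearMap.proj (Sum.inl i) + Complex.I • ContinuousLinearMap.proj (Sum.inr i)
    with hL₁
  set L₂ : (Fin n ⊕ Fin n → ℂ) →L[ℂ] (Fin n → ℂ) :=
    ContinuousLinearMap.pi fun i =>
      ContinuousLinearMap.proj (Sum.inl i) - Complex.I • ContinuousLinearMap.proj (Sum.inr i)
    with hL₂
  set A : (Fin n ⊕ Fin n → ℂ) → (Fin n → ℂ) × (Fin n → ℂ) :=
    fun w => (c + L₁ w, z₀ + L₂ w) with hA
  set G : (Fin n ⊕ Fin n → ℂ) → ℂ := fun w => F (A w) with hG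
  have hL₁app : ∀ w i, L₁ w i = w (Sum.inl i) + Complex.I * w (Sum.inr i) := by
    intro w i; simp [hL₁, ContinuousLinearMap.proj_apply, smul_eq_mul]
  have hL₂app : ∀ w i, L₂ w i = w (Sum.inl i) - Complex.I * w (Sum.inr i) := by
    intro w i; simp [hL₂, ContinuousLinearMap.proj_apply, smul_eq_mul]
  -- membership of A w in U ×ˢ U for small w
  have hmem : ∀ w : Fin n ⊕ Fin n → ℂ, (∀ i, ‖w i‖ < r') → A w ∈ U ×ˢ U := by
    intro w hw
    have key : ∀ (L : (Fin n ⊕ Fin n → ℂ) →L[ℂ] (Fin n → ℂ)) (x₀ : Fin n → ℂ)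
        (hLa : ∀ i, ‖L w i‖ ≤ 2 * r') (hsub : ball x₀ r ⊆ U), x₀ + L w ∈ U := by
      intro L x₀ hLa hsub
      apply hsub
      rw [mem_ball]
      rcases n.eq_zero_or_pos with hn | hn
      · have : Subsingleton (Fin n → ℂ) := by rw [hn]; infer_instance
        simp only [Subsingleton.elim (x₀ + L w) x₀, dist_self]
        exact hr
      · rw [dist_pi_lt_iff hr]
        intro i
        have : dist (x₀ i + L w i) (x₀ i) = ‖L w i‖ := by
          rw [dist_eq_norm]; simp
        calc dist ((x₀ + L w) i) (x₀ i) = ‖L w i‖ := by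
              simpa [Pi.add_apply] using this
          _ ≤ 2 * r' := hLa i
          _ < r := by rw [hr']; linarith
    constructor
    · apply key L₁ c _ hballc
      intro i
      rw [hL₁app]
      calc ‖w (Sum.inl i) + Complex.I * w (Sum.inr i)‖
          ≤ ‖w (Sum.inl i)‖ + ‖Complex.I * w (Sum.inr i)‖ := norm_add_le _ _
        _ ≤ r' + r' := by
            apply add_le_add (hw _).le
            rw [norm_mul, Complex.norm_I, one_mul]
            exact (hw _).le
        _ = 2 * r' := by ring
    · apply key L₂ z₀ _ hball
      intro i
      rw [hL₂app]
      calc ‖w (Sum.inl i) - Complex.I * w (Sum.inr i)‖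
          ≤ ‖w (Sum.inl i)‖ + ‖Complex.I * w (Sum.inr i)‖ := norm_sub_le _ _
        _ ≤ r' + r' := by
            apply add_le_add (hw _).le
            rw [norm_mul, Complex.norm_I, one_mul]
            exact (hw _).le
        _ = 2 * r' := by ring
  -- G is analytic on the polydisc
  have hGanal : ∀ w : Fin n ⊕ Fin n → ℂ, (∀ i, ‖w i‖ < r') → AnalyticAt ℂ G w := by
    intro w hw
    have h1 : AnalyticAt ℂ F (A w) := hF _ (hmem w hw)
    have h2 : AnalyticAt ℂ A w := by
      apply AnalyticAt.prod
      · exact analyticAt_const.add (L₁.analyticAt w)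
      · exact analyticAt_const.add (L₂.analyticAt w)
    exact h1.comp h2
  -- G vanishes at real points of the polydisc
  have hGzero : ∀ w : Fin n ⊕ Fin n → ℂ, (∀ i, ‖w i‖ < r') → (∀ i, (w i).im = 0) →
      G w = 0 := by
    intro w hw hre
    have hreal : ∀ i, starRingEnd ℂ (w i) = w i := by
      intro i
      exact Complex.conj_eq_iff_im.mpr (hre i)
    set z : Fin n → ℂ := z₀ + L₂ w with hz
    have hzU : z ∈ U := (hmem w hw).2
    have hconj : (fun i => starRingEnd ℂ (z i)) = c + L₁ w := by
      funext i
      simp only [hz, Pi.add_apply, map_add, hc]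
      rw [hL₂app, hL₁app]
      rw [map_sub, map_mul]
      rw [hreal, hreal]
      simp only [Complex.conj_I]
      ring
    have := hF0 z hzU
    rw [hconj] at this
    simpa [hG, hA, hz] using this
  -- conclude G = 0 on the polydisc
  have hGall : ∀ w : Fin n ⊕ Fin n → ℂ, (∀ i, ‖w i‖ < r') → G w = 0 :=
    realSlice hGanal hGzero
  -- hence F = 0 near (c, z₀)
  have hFnear : ∀ a b : Fin n → ℂ, (∀ i, ‖a i - c i‖ < r') → (∀ i, ‖b i - z₀ i‖ < r') →
      F (a, b) = 0 := by
    intro a b ha hb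
    set w : Fin n ⊕ Fin n → ℂ := fun j =>
      match j with
      | Sum.inl i => ((a i - c i) + (b i - z₀ i)) / 2
      | Sum.inr i => ((a i - c i) - (b i - z₀ i)) / (2 * Complex.I)
      with hw
    have hwlt : ∀ j, ‖w j‖ < r' := by
      intro j
      cases j with
      | inl i =>
        calc ‖((a i - c i) + (b i - z₀ i)) / 2‖
            = ‖(a i - c i) + (b i - z₀ i)‖ / 2 := by
              rw [norm_div]; norm_num
          _ ≤ (‖a i - c i‖ + ‖b i - z₀ i‖) / 2 := by
              apply div_le_div_of_nonneg_right (norm_add_le _ _) (by norm_num) |>.trans_eq rfl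
          _ < r' := by
              have := ha i; have := hb i; linarith
      | inr i =>
        have h2I : ‖(2 * Complex.I : ℂ)‖ = 2 := by
          rw [norm_mul, Complex.norm_I]
          simp
        calc ‖((a i - c i) - (b i - z₀ i)) / (2 * Complex.I)‖
            = ‖(a i - c i) - (b i - z₀ i)‖ / 2 := by
              rw [norm_div, h2I]
          _ ≤ (‖a i - c i‖ + ‖b i - z₀ i‖) / 2 := by
              apply div_le_div_of_nonneg_right (norm_sub_le _ _) (by norm_num) |>.trans_eq rfl
          _ < r' := by
              have := ha i; have := hb i; linarith
    have hAw : A w = (a, b) := by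
      have hI : (Complex.I : ℂ) ≠ 0 := Complex.I_ne_zero
      apply Prod.ext
      · show c + L₁ w = a
        funext i
        simp only [Pi.add_apply]
        rw [hL₁app]
        show c i + (((a i - c i) + (b i - z₀ i)) / 2
          + Complex.I * (((a i - c i) - (b i - z₀ i)) / (2 * Complex.I))) = a i
        field_simp
        ring
      · show z₀ + L₂ w = b
        funext i
        simp only [Pi.add_apply]
        rw [hL₂app]
        show z₀ i + (((a i - c i) + (b i - z₀ i)) / 2
          - Complex.I * (((a i - c i) - (b i - z₀ i)) / (2 * Complex.I))) = b i
        field_simp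
        ring
    have h := hGall w hwlt
    simp only [hG] at h
    rw [hAw] at h
    exact h
  -- eventual vanishing at (c, z₀)
  have hev : F =ᶠ[𝓝 ((c, z₀) : (Fin n → ℂ) × (Fin n → ℂ))] 0 := by
    have hnb : (ball c r' ×ˢ ball z₀ r' : Set ((Fin n → ℂ) × (Fin n → ℂ))) ∈
        𝓝 ((c, z₀) : (Fin n → ℂ) × (Fin n → ℂ)) := by
      apply ((isOpen_ball.prod isOpen_ball)).mem_nhds
      exact ⟨mem_ball_self hr'pos, mem_ball_self hr'pos⟩
    filter_upwards [hnb] with p hp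
    obtain ⟨hp1, hp2⟩ := hp
    have ha : ∀ i, ‖p.1 i - c i‖ < r' := by
      intro i
      calc ‖p.1 i - c i‖ = dist (p.1 i) (c i) := (dist_eq_norm _ _).symm
        _ ≤ dist p.1 c := dist_le_pi_dist p.1 c i
        _ < r' := mem_ball.mp hp1
    have hb : ∀ i, ‖p.2 i - z₀ i‖ < r' := by
      intro i
      calc ‖p.2 i - z₀ i‖ = dist (p.2 i) (z₀ i) := (dist_eq_norm _ _).symm
        _ ≤ dist p.2 z₀ := dist_le_pi_dist p.2 z₀ i
        _ < r' := mem_ball.mp hp2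
    simpa using hFnear p.1 p.2 ha hb
  -- identity theorem on U ×ˢ U
  have hconn : IsPreconnected (U ×ˢ U : Set ((Fin n → ℂ) × (Fin n → ℂ))) :=
    (hUconn.prod hUconn).isPreconnected
  have h₀ : ((c, z₀) : (Fin n → ℂ) × (Fin n → ℂ)) ∈ U ×ˢ U := ⟨hcU, hz₀⟩
  intro p hp
  exact hF.eqOn_zero_of_preconnected_of_eventuallyEq_zero hconn h₀ hev hp
end

section
/- Let ∂Ω be a set equipped with a gauge ρ(ζ,ξ) = |ζ−ξ|² + |⟨ζ−ξ, n(ζ)⟩|, where n : ∂Ω → ℂⁿ is L-Lipschitz with respect to the Euclidean metric, ∂Ω ⊆ ℂⁿ. Define Q(ζ,t) = {ξ ∈ ∂Ω : ρ(ζ,ξ) < t}. Then there exists a constant C ≥ 1, depending only on L, such that for all ζ, ξ ∈ ∂Ω and t > 0, if Q(ζ,t) ∩ Q(ξ,t) ≠ ∅, then Q(ξ,t) ⊆ Q(ζ, C·t). In fact C = (4 + √2·L)² works. -/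
open scoped ComplexOrder

lemma stmt6_aux (L : ℝ) (hL : 0 ≤ L) : 12 + 4 * L ≤ (4 + Real.sqrt 2 * L) ^ 2 := by
  have h2' : (1 : ℝ) ≤ Real.sqrt 2 := by
    rw [show (1:ℝ) = Real.sqrt 1 by simp]
    exact Real.sqrt_le_sqrt (by norm_num)
  have hsq2 : Real.sqrt 2 ^ 2 = 2 := Real.sq_sqrt (by norm_num)
  have hLs : L ≤ Real.sqrt 2 * L := by nlinarith
  nlinarith [sq_nonneg L]

set_option maxHeartbeats 1000000 in
theorem stmt6 {n : ℕ} (S : Set (EuclideanSpace ℂ (Fin n)))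
    (nu : EuclideanSpace ℂ (Fin n) → EuclideanSpace ℂ (Fin n)) (L : ℝ) (hL : 0 ≤ L)
    (hLip : ∀ x ∈ S, ∀ y ∈ S, ‖nu x - nu y‖ ≤ L * ‖x - y‖) :
    let Q : EuclideanSpace ℂ (Fin n) → ℝ → Set (EuclideanSpace ℂ (Fin n)) :=
      fun ζ t => {ξ ∈ S | ‖ζ - ξ‖ ^ 2 + ‖(inner ℂ (nu ζ) (ζ - ξ) : ℂ)‖ < t}
    ∀ ζ ∈ S, ∀ ξ ∈ S, ∀ t : ℝ, 0 < t →
      (Q ζ t ∩ Q ξ t).Nonempty → Q ξ t ⊆ Q ζ ((4 + Real.sqrt 2 * L) ^ 2 * t) := by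
  intro Q ζ hζ ξ hξ t ht hne w hw
  obtain ⟨η, ⟨hηS, hη1⟩, ⟨hηS', hη2⟩⟩ := hne
  obtain ⟨hwS, hw'⟩ := hw
  set s := Real.sqrt t with hsdef
  have hs0 : 0 ≤ s := Real.sqrt_nonneg t
  have hs : s ^ 2 = t := Real.sq_sqrt ht.le
  have hI1 : ‖(inner ℂ (nu ζ) (ζ - η) : ℂ)‖ < t := by
    nlinarith [sq_nonneg ‖ζ - η‖]
  have hI2 : ‖(inner ℂ (nu ξ) (ξ - η) : ℂ)‖ < t := by
    nlinarith [sq_nonneg ‖ξ - η‖]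
  have hI3 : ‖(inner ℂ (nu ξ) (ξ - w) : ℂ)‖ < t := by
    nlinarith [sq_nonneg ‖ξ - w‖]
  have h1 : ‖ζ - η‖ < s := by
    rw [hsdef]
    exact (Real.lt_sqrt (norm_nonneg _)).mpr
      (by nlinarith [norm_nonneg (inner ℂ (nu ζ) (ζ - η) : ℂ)])
  have h2 : ‖ξ - η‖ < s := by
    rw [hsdef]
    exact (Real.lt_sqrt (norm_nonneg _)).mpr
      (by nlinarith [norm_nonneg (inner ℂ (nu ξ) (ξ - η) : ℂ)])
  have h3 : ‖ξ - w‖ < s := by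
    rw [hsdef]
    exact (Real.lt_sqrt (norm_nonneg _)).mpr
      (by nlinarith [norm_nonneg (inner ℂ (nu ξ) (ξ - w) : ℂ)])
  have hζξ : ‖ζ - ξ‖ < 2 * s := by
    have e : ζ - ξ = (ζ - η) - (ξ - η) := by abel
    calc ‖ζ - ξ‖ ≤ ‖ζ - η‖ + ‖ξ - η‖ := by rw [e]; exact norm_sub_le _ _
    _ < 2 * s := by linarith
  have hζw : ‖ζ - w‖ < 3 * s := by
    have e : ζ - w = ((ζ - η) - (ξ - η)) + (ξ - w) := by abel
    calc ‖ζ - w‖ ≤ ‖(ζ - η) - (ξ - η)‖ + ‖ξ - w‖ := by rw [e]; exact norm_add_le _ _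
    _ ≤ ‖ζ - η‖ + ‖ξ - η‖ + ‖ξ - w‖ := by linarith [norm_sub_le (ζ - η) (ξ - η)]
    _ < 3 * s := by linarith
  have hLipζξ : ‖nu ζ - nu ξ‖ ≤ L * ‖ζ - ξ‖ := hLip ζ hζ ξ hξ
  -- bound for inner ℂ (nu ζ - nu ξ) applied to a vector v
  have key : ∀ v : EuclideanSpace ℂ (Fin n),
      ‖(inner ℂ (nu ζ) v : ℂ)‖ ≤ ‖(inner ℂ (nu ξ) v : ℂ)‖ + L * ‖ζ - ξ‖ * ‖v‖ := by
    intro v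
    have e : (inner ℂ (nu ζ) v : ℂ) = inner ℂ (nu ξ) v + inner ℂ (nu ζ - nu ξ) v := by
      rw [inner_sub_left]; ring
    calc ‖(inner ℂ (nu ζ) v : ℂ)‖ ≤ ‖(inner ℂ (nu ξ) v : ℂ)‖ + ‖(inner ℂ (nu ζ - nu ξ) v : ℂ)‖ := by
          rw [e]; exact norm_add_le _ _
      _ ≤ ‖(inner ℂ (nu ξ) v : ℂ)‖ + L * ‖ζ - ξ‖ * ‖v‖ := by
          have := norm_inner_le_norm (𝕜 := ℂ) (nu ζ - nu ξ) v
          nlinarith [norm_nonneg v]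
  have hK2 : ‖(inner ℂ (nu ζ) (ξ - η) : ℂ)‖ < t + L * (2 * s) * s := by
    have := key (ξ - η)
    have hmul : L * ‖ζ - ξ‖ * ‖ξ - η‖ ≤ L * (2 * s) * s := by
      have h := mul_le_mul hζξ.le h2.le (norm_nonneg _) (by positivity : (0:ℝ) ≤ 2 * s)
      calc L * ‖ζ - ξ‖ * ‖ξ - η‖ = L * (‖ζ - ξ‖ * ‖ξ - η‖) := by ring
        _ ≤ L * (2 * s * s) := mul_le_mul_of_nonneg_left h hL
        _ = L * (2 * s) * s := by ring
    linarith
  have hK3 : ‖(inner ℂ (nu ζ) (ξ - w) : ℂ)‖ < t + L * (2 * s) * s := by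
    have := key (ξ - w)
    have hmul : L * ‖ζ - ξ‖ * ‖ξ - w‖ ≤ L * (2 * s) * s := by
      have h := mul_le_mul hζξ.le h3.le (norm_nonneg _) (by positivity : (0:ℝ) ≤ 2 * s)
      calc L * ‖ζ - ξ‖ * ‖ξ - w‖ = L * (‖ζ - ξ‖ * ‖ξ - w‖) := by ring
        _ ≤ L * (2 * s * s) := mul_le_mul_of_nonneg_left h hL
        _ = L * (2 * s) * s := by ring
    linarith
  have hinner : ‖(inner ℂ (nu ζ) (ζ - w) : ℂ)‖ < 3 * t + 4 * L * t := by
    have e : (inner ℂ (nu ζ) (ζ - w) : ℂ) =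
        inner ℂ (nu ζ) (ζ - η) - inner ℂ (nu ζ) (ξ - η) + inner ℂ (nu ζ) (ξ - w) := by
      rw [← inner_sub_right, ← inner_add_right]
      congr 1
      abel
    set A := (inner ℂ (nu ζ) (ζ - η) : ℂ) with hA
    set B := (inner ℂ (nu ζ) (ξ - η) : ℂ) with hB
    set C := (inner ℂ (nu ζ) (ξ - w) : ℂ) with hC
    have hle : ‖(inner ℂ (nu ζ) (ζ - w) : ℂ)‖ ≤ ‖A‖ + ‖B‖ + ‖C‖ := by
      rw [e]
      calc ‖A - B + C‖ ≤ ‖A - B‖ + ‖C‖ := norm_add_le _ _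
        _ ≤ ‖A‖ + ‖B‖ + ‖C‖ := by linarith [norm_sub_le A B]
    have hss : L * (2 * s) * s = 2 * L * t := by rw [← hs]; ring
    rw [hss] at hK2 hK3
    linarith
  refine ⟨hwS, ?_⟩
  have hsq : ‖ζ - w‖ ^ 2 < 9 * t := by
    have h := mul_self_lt_mul_self (norm_nonneg (ζ - w)) hζw
    calc ‖ζ - w‖ ^ 2 = ‖ζ - w‖ * ‖ζ - w‖ := sq ‖ζ - w‖
      _ < (3 * s) * (3 * s) := h
      _ = 9 * t := by rw [← hs]; ring
  have hC : (12 + 4 * L) * t ≤ (4 + Real.sqrt 2 * L) ^ 2 * t :=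
    mul_le_mul_of_nonneg_right (stmt6_aux L hL) ht.le
  linarith
end

section
/- Let Ω̄ ⊆ ℂⁿ be a bounded set with diameter at most C₁, and let n : Ω̄ → ℂⁿ be bounded by C₂ and Lipschitz with constant C₃ on Ω̄. Then there is a constant C₄ (depending only on C₁, C₂, C₃) such that for all z, w, z', w' ∈ Ω̄: |z'−w'|² + |⟨z'−w', n(z')⟩| ≤ 3(|z−w|² + |⟨z−w, n(z)⟩|) + C₄(|z−z'| + |w−w'|). -/
theorem stmt8 {n : ℕ} (S : Set (EuclideanSpace ℂ (Fin n)))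
    (nu : EuclideanSpace ℂ (Fin n) → EuclideanSpace ℂ (Fin n))
    (C₁ C₂ C₃ : ℝ)
    (hdiam : ∀ ζ ∈ S, ∀ ξ ∈ S, ‖ζ - ξ‖ ≤ C₁)
    (hbdd : ∀ ζ ∈ S, ‖nu ζ‖ ≤ C₂)
    (hLip : ∀ ζ ∈ S, ∀ ξ ∈ S, ‖nu ζ - nu ξ‖ ≤ C₃ * ‖ζ - ξ‖) :
    ∃ C₄ : ℝ, ∀ z ∈ S, ∀ w ∈ S, ∀ z' ∈ S, ∀ w' ∈ S,
      ‖z' - w'‖ ^ 2 + ‖(inner ℂ (nu z') (z' - w') : ℂ)‖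
        ≤ 3 * (‖z - w‖ ^ 2 + ‖(inner ℂ (nu z) (z - w) : ℂ)‖)
          + C₄ * (‖z - z'‖ + ‖w - w'‖) := by
  refine ⟨4 * |C₁| + |C₃| * |C₁| + |C₂|, ?_⟩
  intro z hz w hw z' hz' w' hw'
  have h1 : ‖z' - w'‖ ≤ |C₁| := (hdiam z' hz' w' hw').trans (le_abs_self C₁)
  have h2 : ‖z - w‖ ≤ |C₁| := (hdiam z hz w hw).trans (le_abs_self C₁)
  have h5 : ‖z - z'‖ ≤ |C₁| := (hdiam z hz z' hz').trans (le_abs_self C₁)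
  have h6 : ‖w - w'‖ ≤ |C₁| := (hdiam w hw w' hw').trans (le_abs_self C₁)
  have hdiff : ‖(z' - w') - (z - w)‖ ≤ ‖z - z'‖ + ‖w - w'‖ := by
    have : (z' - w') - (z - w) = (z' - z) + (w - w') := by abel
    rw [this]
    calc ‖(z' - z) + (w - w')‖ ≤ ‖z' - z‖ + ‖w - w'‖ := norm_add_le _ _
      _ = ‖z - z'‖ + ‖w - w'‖ := by rw [norm_sub_rev]
  have h4 : ‖z' - w'‖ ≤ ‖z - w‖ + (‖z - z'‖ + ‖w - w'‖) := by
    calc ‖z' - w'‖ = ‖(z - w) + ((z' - w') - (z - w))‖ := by congr 1; abel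
      _ ≤ ‖z - w‖ + ‖(z' - w') - (z - w)‖ := norm_add_le _ _
      _ ≤ _ := by linarith
  have hLz : ‖nu z' - nu z‖ ≤ |C₃| * (‖z - z'‖ + ‖w - w'‖) := by
    have := hLip z' hz' z hz
    rw [norm_sub_rev z'] at this
    have h7 : C₃ * ‖z - z'‖ ≤ |C₃| * ‖z - z'‖ :=
      mul_le_mul_of_nonneg_right (le_abs_self C₃) (norm_nonneg _)
    have h8 : |C₃| * ‖z - z'‖ ≤ |C₃| * (‖z - z'‖ + ‖w - w'‖) := by
      have := norm_nonneg (w - w')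
      nlinarith [abs_nonneg C₃]
    linarith
  have hb : ‖nu z'‖ ≤ |C₂| := (hbdd z' hz').trans (le_abs_self C₂)
  have hsplit : (inner ℂ (nu z') (z' - w') : ℂ)
      = inner ℂ (nu z) (z - w) + inner ℂ (nu z' - nu z) (z - w)
        + inner ℂ (nu z') ((z' - w') - (z - w)) := by
    simp [inner_sub_left, inner_sub_right]
    ring
  have hI : ‖(inner ℂ (nu z') (z' - w') : ℂ)‖
      ≤ ‖(inner ℂ (nu z) (z - w) : ℂ)‖ + |C₃| * (‖z - z'‖ + ‖w - w'‖) * |C₁|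
        + |C₂| * (‖z - z'‖ + ‖w - w'‖) := by
    rw [hsplit]
    have t1 : ‖(inner ℂ (nu z' - nu z) (z - w) : ℂ)‖ ≤ |C₃| * (‖z - z'‖ + ‖w - w'‖) * |C₁| := by
      calc ‖(inner ℂ (nu z' - nu z) (z - w) : ℂ)‖ ≤ ‖nu z' - nu z‖ * ‖z - w‖ :=
            norm_inner_le_norm _ _
        _ ≤ |C₃| * (‖z - z'‖ + ‖w - w'‖) * |C₁| := by
            have := norm_nonneg (nu z' - nu z)
            have := norm_nonneg (z - w)
            nlinarith [abs_nonneg C₁, abs_nonneg C₃, norm_nonneg (z - z'), norm_nonneg (w - w')]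
    have t2 : ‖(inner ℂ (nu z') ((z' - w') - (z - w)) : ℂ)‖ ≤ |C₂| * (‖z - z'‖ + ‖w - w'‖) := by
      calc ‖(inner ℂ (nu z') ((z' - w') - (z - w)) : ℂ)‖ ≤ ‖nu z'‖ * ‖(z' - w') - (z - w)‖ :=
            norm_inner_le_norm _ _
        _ ≤ |C₂| * (‖z - z'‖ + ‖w - w'‖) := by
            have := norm_nonneg (nu z')
            have := norm_nonneg ((z' - w') - (z - w))
            nlinarith [abs_nonneg C₂]
    calc ‖(inner ℂ (nu z) (z - w) : ℂ) + inner ℂ (nu z' - nu z) (z - w)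
          + inner ℂ (nu z') ((z' - w') - (z - w))‖
        ≤ ‖(inner ℂ (nu z) (z - w) : ℂ)‖ + ‖(inner ℂ (nu z' - nu z) (z - w) : ℂ)‖
          + ‖(inner ℂ (nu z') ((z' - w') - (z - w)) : ℂ)‖ := norm_add₃_le
      _ ≤ _ := by linarith
  have hN : ‖z' - w'‖ ^ 2 ≤ ‖z - w‖ ^ 2 + 4 * |C₁| * (‖z - z'‖ + ‖w - w'‖) := by
    have ha := norm_nonneg (z - w)
    have hb' := norm_nonneg (z' - w')
    have hc := norm_nonneg (z - z')
    have hd := norm_nonneg (w - w')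
    nlinarith [abs_nonneg C₁]
  have hnn : 0 ≤ ‖z - w‖ ^ 2 + ‖(inner ℂ (nu z) (z - w) : ℂ)‖ := by positivity
  nlinarith [norm_nonneg (z - z'), norm_nonneg (w - w')]
end

section
/- Let {B_i} be a sequence of compact operators on a Hilbert space H such that both B_i → 0 and B_i* → 0 in the strong operator topology, and such that lim_{i→∞} ‖B_i‖ exists. Then there exist natural numbers i(1) < i(2) < ⋯ such that Σ_{m=1}^∞ B_{i(m)} converges in the strong operator topology to a bounded operator whose essential norm equals lim_{i→∞} ‖B_i‖. -/
open Filter Topology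
set_option linter.unusedSectionVars false
set_option maxHeartbeats 1000000

section Aux
open Submodule

variable {H : Type*} [NormedAddCommGroup H] [InnerProductSpace ℂ H] [CompleteSpace H]

/-- Orthogonal projection onto `U` as an operator `H →L[ℂ] H`, defined classically so that it
makes sense for arbitrary submodules. -/
noncomputable def Pr (U : Submodule ℂ H) : H →L[ℂ] H := by
  classical exact
    if h : HasOrthogonalProjection U then
      (letI := h; U.subtypeL.comp (orthogonalProjection U)) else 0

lemma Pr_def (U : Submodule ℂ H) [h : HasOrthogonalProjection U] :
    Pr U = U.subtypeL.comp (orthogonalProjection U) := by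
  classical
  simp only [Pr]
  rw [dif_pos h]

lemma Pr_apply (U : Submodule ℂ H) [h : HasOrthogonalProjection U] (x : H) :
    Pr U x = (orthogonalProjection U x : H) := by rw [Pr_def]; rfl

lemma Pr_norm_le (U : Submodule ℂ H) [HasOrthogonalProjection U] (x : H) : ‖Pr U x‖ ≤ ‖x‖ := by
  rw [Pr_apply]
  calc ‖(orthogonalProjection U x : H)‖ = ‖orthogonalProjection U x‖ := rfl
    _ ≤ ‖orthogonalProjection U‖ * ‖x‖ := (orthogonalProjection U).le_opNorm x
    _ ≤ 1 * ‖x‖ := mul_le_mul_of_nonneg_right (orthogonalProjection_norm_le U) (norm_nonneg x)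
    _ = ‖x‖ := one_mul ‖x‖

lemma Pr_mem (U : Submodule ℂ H) [HasOrthogonalProjection U] (x : H) : Pr U x ∈ U := by
  rw [Pr_apply]; exact (orthogonalProjection U x).2

lemma Pr_eq_self (U : Submodule ℂ H) [HasOrthogonalProjection U] {x : H} (hx : x ∈ U) :
    Pr U x = x := by
  rw [Pr_apply]
  exact starProjection_eq_self_iff.2 hx

lemma Pr_bot : Pr (⊥ : Submodule ℂ H) = 0 := by
  rw [Pr_def]
  ext x
  simp [orthogonalProjection_bot]

lemma sub_Pr_mem (U : Submodule ℂ H) [HasOrthogonalProjection U] (x : H) : x - Pr U x ∈ Uᗮ := by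
  rw [Pr_apply]; exact sub_starProjection_mem_orthogonal x

lemma Pr_zero_of_mem_orth (U : Submodule ℂ H) [HasOrthogonalProjection U] {x : H} (hx : x ∈ Uᗮ) :
    Pr U x = 0 := by
  rw [Pr_apply]
  have := Submodule.orthogonalProjectionOnto_apply_of_mem_orthogonal (K := U) hx
  exact congrArg Subtype.val this

lemma Pr_inner_right (U : Submodule ℂ H) [HasOrthogonalProjection U] {u : H} (hu : u ∈ U) (x : H) :
    inner (𝕜 := ℂ) u (Pr U x) = inner (𝕜 := ℂ) u x := by
  rw [Pr_apply]
  have := inner_orthogonalProjection_eq_of_mem_left (K := U) ⟨u, hu⟩ x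
  rw [Submodule.coe_inner] at this
  exact this

lemma Pr_symm (U : Submodule ℂ H) [HasOrthogonalProjection U] (x y : H) :
    inner (𝕜 := ℂ) (Pr U x) y = inner (𝕜 := ℂ) x (Pr U y) := by
  rw [Pr_apply, Pr_apply]
  exact inner_starProjection_left_eq_right (K := U) x y

lemma norm_sub_Pr_le (U : Submodule ℂ H) [HasOrthogonalProjection U] (x : H) :
    ‖x - Pr U x‖ ≤ ‖x‖ := by
  have horth : inner (𝕜 := ℂ) (Pr U x) (x - Pr U x) = 0 :=
    Submodule.inner_right_of_mem_orthogonal (Pr_mem U x) (sub_Pr_mem U x)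
  have hp := norm_add_sq_eq_norm_sq_add_norm_sq_of_inner_eq_zero (𝕜 := ℂ)
    (Pr U x) (x - Pr U x) horth
  have hsum : Pr U x + (x - Pr U x) = x := by abel
  rw [hsum] at hp
  nlinarith [norm_nonneg (Pr U x), norm_nonneg (x - Pr U x), norm_nonneg x]

/-- Norm-squared of a sum of pairwise orthogonal vectors. -/
lemma norm_sq_sum_orth (s : Finset ℕ) (v : ℕ → H)
    (h : ∀ m ∈ s, ∀ k ∈ s, m ≠ k → inner (𝕜 := ℂ) (v m) (v k) = 0) :
    ‖∑ m ∈ s, v m‖ ^ 2 = ∑ m ∈ s, ‖v m‖ ^ 2 := by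
  classical
  induction s using Finset.induction_on with
  | empty => simp
  | insert a t hnotmem ih =>
    rw [Finset.sum_insert hnotmem, Finset.sum_insert hnotmem]
    have horth : inner (𝕜 := ℂ) (v a) (∑ m ∈ t, v m) = 0 := by
      rw [inner_sum]
      refine Finset.sum_eq_zero fun k hk => ?_
      exact h a (Finset.mem_insert_self a t) k (Finset.mem_insert_of_mem hk)
        (fun hak => hnotmem (hak ▸ hk))
    have hpy := norm_add_sq_eq_norm_sq_add_norm_sq_of_inner_eq_zero (𝕜 := ℂ)
      (v a) (∑ m ∈ t, v m) horth
    have h2 : ‖v a + ∑ m ∈ t, v m‖ ^ 2 = ‖v a‖ ^ 2 + ‖∑ m ∈ t, v m‖ ^ 2 := by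
      rw [sq, sq, sq]; exact hpy
    rw [h2, ih (fun m hm k hk hmk => h m (Finset.mem_insert_of_mem hm) k
      (Finset.mem_insert_of_mem hk) hmk)]

lemma qdiff_mem_orth {U U' : Submodule ℂ H} [HasOrthogonalProjection U]
    [HasOrthogonalProjection U'] (hUU : U ≤ U') (x : H) :
    Pr U' x - Pr U x ∈ Uᗮ := by
  intro u hu
  rw [inner_sub_right, Pr_inner_right U hu x, Pr_inner_right U' (hUU hu) x, sub_self]

lemma norm_sq_Pr_nested {U U' : Submodule ℂ H} [HasOrthogonalProjection U]
    [HasOrthogonalProjection U'] (hUU : U ≤ U') (x : H) :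
    ‖Pr U' x‖ ^ 2 = ‖Pr U x‖ ^ 2 + ‖Pr U' x - Pr U x‖ ^ 2 := by
  have horth : inner (𝕜 := ℂ) (Pr U x) (Pr U' x - Pr U x) = 0 :=
    Submodule.inner_right_of_mem_orthogonal (Pr_mem U x) (qdiff_mem_orth hUU x)
  have hpy := norm_add_sq_eq_norm_sq_add_norm_sq_of_inner_eq_zero (𝕜 := ℂ)
    (Pr U x) (Pr U' x - Pr U x) horth
  have h2 : Pr U x + (Pr U' x - Pr U x) = Pr U' x := by abel
  rw [h2] at hpy
  rw [sq, sq, sq]; exact hpy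

lemma opNorm_le_of_norm_le_one (f : H →L[ℂ] H) {a : ℝ} (ha : 0 ≤ a)
    (h : ∀ x : H, ‖x‖ ≤ 1 → ‖f x‖ ≤ a) : ‖f‖ ≤ a := by
  refine f.opNorm_le_bound ha fun x => ?_
  rcases eq_or_ne x 0 with rfl | hx
  · simp [mul_nonneg ha (norm_nonneg (0 : H))]
  · have hxn : (0:ℝ) < ‖x‖ := norm_pos_iff.2 hx
    set u : H := ((‖x‖ : ℂ))⁻¹ • x with hu
    have hun : ‖u‖ = 1 := by
      rw [hu, norm_smul]
      simp [norm_inv, hxn.ne']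
    have h1 : f x = (‖x‖ : ℂ) • f u := by
      rw [hu, map_smul, smul_smul]
      rw [mul_inv_cancel₀ (by exact_mod_cast hxn.ne')]
      simp
    rw [h1, norm_smul]
    simp only [Complex.norm_real, Real.norm_eq_abs, abs_of_pos hxn]
    calc ‖x‖ * ‖f u‖ ≤ ‖x‖ * a := mul_le_mul_of_nonneg_left (h u hun.le) hxn.le
      _ = a * ‖x‖ := mul_comm _ _

lemma exists_norm_le_one_norm_ge (f : H →L[ℂ] H) {ε : ℝ} (hε : 0 < ε) :
    ∃ x : H, ‖x‖ ≤ 1 ∧ ‖f‖ - ε ≤ ‖f x‖ := by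
  by_contra hcon
  push_neg at hcon
  have h0 := hcon 0 (by simp)
  rw [map_zero, norm_zero] at h0
  have ha : (0:ℝ) ≤ ‖f‖ - ε := le_of_lt h0
  have := opNorm_le_of_norm_le_one f ha fun x hx => (hcon x hx).le
  linarith


lemma norm_adjoint_eq (A : H →L[ℂ] H) : ‖ContinuousLinearMap.adjoint A‖ = ‖A‖ :=
  LinearIsometryEquiv.norm_map ContinuousLinearMap.adjoint A

lemma adjoint_Pr (U : Submodule ℂ H) [CompleteSpace U] :
    ContinuousLinearMap.adjoint (Pr U) = Pr U := by
  rw [Pr_def]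
  exact isSelfAdjoint_starProjection U

lemma norm_Pr_comp (U : Submodule ℂ H) [CompleteSpace U] (A : H →L[ℂ] H) :
    ‖(Pr U).comp A‖ = ‖(ContinuousLinearMap.adjoint A).comp (Pr U)‖ := by
  conv_lhs => rw [← norm_adjoint_eq ((Pr U).comp A)]
  rw [ContinuousLinearMap.adjoint_comp, adjoint_Pr]

/-- A compact operator sends bounded weakly-null sequences to norm-null sequences. -/
lemma compact_weak_null (K' : H →L[ℂ] H) (hK : IsCompactOperator K') (y : ℕ → H)
    (hy1 : ∀ m, ‖y m‖ ≤ 1)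
    (hy2 : ∀ z : H, Tendsto (fun m => (inner ℂ (y m) z : ℂ)) atTop (𝓝 0)) :
    Tendsto (fun m => ‖K' (y m)‖) atTop (𝓝 0) := by
  have hcpt : IsCompact (closure (K' '' Metric.closedBall 0 1)) :=
    hK.isCompact_closure_image_closedBall (𝕜₁ := ℂ) (f := (K' : H →ₗ[ℂ] H)) 1
  have hmem : ∀ m, K' (y m) ∈ closure (K' '' Metric.closedBall 0 1) := fun m =>
    subset_closure ⟨y m, by simpa [Metric.mem_closedBall, dist_zero_right] using hy1 m, rfl⟩
  have hweak : ∀ z : H, Tendsto (fun m => (inner ℂ (K' (y m)) z : ℂ)) atTop (𝓝 0) := by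
    intro z
    have : ∀ m, (inner ℂ (K' (y m)) z : ℂ) = inner ℂ (y m) (ContinuousLinearMap.adjoint K' z) := by
      intro m
      rw [ContinuousLinearMap.adjoint_inner_right]
    simpa [this] using hy2 (ContinuousLinearMap.adjoint K' z)
  have hmain : Tendsto (fun m => K' (y m)) atTop (𝓝 0) := by
    refine tendsto_of_subseq_tendsto fun ns hns => ?_
    obtain ⟨a, _, φ, hφ, hφtend⟩ := hcpt.tendsto_subseq (x := fun n => K' (y (ns n)))
      (fun n => hmem _)
    have ha : a = 0 := by
      have hz : ∀ z : H, (inner ℂ a z : ℂ) = 0 := by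
        intro z
        have h1 : Tendsto (fun n => (inner ℂ (K' (y (ns (φ n)))) z : ℂ)) atTop (𝓝 (inner ℂ a z)) :=
          hφtend.inner tendsto_const_nhds
        have h2 : Tendsto (fun n => (inner ℂ (K' (y (ns (φ n)))) z : ℂ)) atTop (𝓝 0) :=
          (hweak z).comp ((hns.comp hφ.tendsto_atTop))
        exact tendsto_nhds_unique h1 h2
      have := hz a
      rwa [inner_self_eq_zero] at this
    exact ⟨φ, by rw [← ha]; exact hφtend⟩
  simpa using hmain.norm

lemma eventually_norm_comp_Pr_le (C : ℕ → H →L[ℂ] H) (M : ℝ) (hM : ∀ n, ‖C n‖ ≤ M)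
    (hst : ∀ x : H, Tendsto (fun n => C n x) atTop (𝓝 0))
    (U : Submodule ℂ H) [FiniteDimensional ℂ U] {ε : ℝ} (hε : 0 < ε) :
    ∀ᶠ n in atTop, ‖(C n).comp (Pr U)‖ ≤ ε := by
  haveI : CompleteSpace U := FiniteDimensional.complete ℂ U
  have hM0 : (0:ℝ) ≤ M := le_trans (norm_nonneg _) (hM 0)
  set δ : ℝ := ε / (2 * (M + 1)) with hδdef
  have hδ : 0 < δ := by positivity
  have hcpt : IsCompact ((Subtype.val : U → H) '' Metric.closedBall 0 1) :=
    (isCompact_closedBall (0 : U) 1).image continuous_subtype_val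
  obtain ⟨t, htfin, htsub⟩ := Metric.totallyBounded_iff.mp hcpt.totallyBounded δ hδ
  have hev : ∀ᶠ n in atTop, ∀ y ∈ t, ‖C n y‖ ≤ ε / 2 := by
    rw [Set.Finite.eventually_all htfin]
    intro y _
    have := (hst y).norm
    simp only [norm_zero] at this
    exact this.eventually (eventually_le_nhds (by positivity : (0:ℝ) < ε/2))
  filter_upwards [hev] with n hn
  refine opNorm_le_of_norm_le_one _ hε.le fun x hx => ?_
  have hmem : Pr U x ∈ (Subtype.val : U → H) '' Metric.closedBall 0 1 := by
    refine ⟨orthogonalProjection U x, ?_, (Pr_apply U x).symm⟩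
    rw [Metric.mem_closedBall, dist_zero_right]
    calc ‖orthogonalProjection U x‖ = ‖Pr U x‖ := by rw [Pr_apply]; rfl
      _ ≤ ‖x‖ := Pr_norm_le U x
      _ ≤ 1 := hx
  obtain ⟨y, hy, hxy⟩ := Set.mem_iUnion₂.mp (htsub hmem)
  rw [Metric.mem_ball] at hxy
  calc ‖C n (Pr U x)‖ = ‖C n y + C n (Pr U x - y)‖ := by rw [map_sub, add_sub_cancel]
    _ ≤ ‖C n y‖ + ‖C n (Pr U x - y)‖ := norm_add_le _ _
    _ ≤ ε / 2 + M * ‖Pr U x - y‖ := by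
        refine add_le_add (hn y hy) ?_
        exact le_trans ((C n).le_opNorm _) (mul_le_mul_of_nonneg_right (hM n) (norm_nonneg _))
    _ ≤ ε / 2 + M * δ := by
        refine add_le_add_right (mul_le_mul_of_nonneg_left ?_ hM0) _
        rw [← dist_eq_norm]; exact hxy.le
    _ ≤ ε / 2 + ε / 2 := by
        refine add_le_add_right ?_ _
        rw [hδdef, mul_comm, div_mul_eq_mul_div, div_le_div_iff₀ (by positivity) two_pos]
        nlinarith
    _ = ε := by ring

lemma norm_sub_Pr_le_dist (E : Submodule ℂ H) [HasOrthogonalProjection E] (z e : H) (he : e ∈ E) :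
    ‖z - Pr E z‖ ≤ ‖z - e‖ := by
  have horth : inner (𝕜 := ℂ) (z - Pr E z) (Pr E z - e) = 0 :=
    Submodule.inner_left_of_mem_orthogonal (Submodule.sub_mem E (Pr_mem E z) he) (sub_Pr_mem E z)
  have hp := norm_add_sq_eq_norm_sq_add_norm_sq_of_inner_eq_zero (𝕜 := ℂ)
    (z - Pr E z) (Pr E z - e) horth
  have hsum : z - Pr E z + (Pr E z - e) = z - e := by abel
  rw [hsum] at hp
  nlinarith [norm_nonneg (z - Pr E z), norm_nonneg (z - e), norm_nonneg (Pr E z - e)]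

lemma exists_findim_approx (Bc : H →L[ℂ] H) (hB : IsCompactOperator Bc) {ε : ℝ} (hε : 0 < ε) :
    ∃ E : Submodule ℂ H, FiniteDimensional ℂ E ∧ ‖Bc - (Pr E).comp Bc‖ ≤ ε := by
  have hcpt : IsCompact (closure (Bc '' Metric.closedBall 0 1)) :=
    hB.isCompact_closure_image_closedBall (𝕜₁ := ℂ) (f := (Bc : H →ₗ[ℂ] H)) 1
  obtain ⟨t, htfin, htsub⟩ := Metric.totallyBounded_iff.mp hcpt.totallyBounded ε hε
  refine ⟨Submodule.span ℂ t, FiniteDimensional.span_of_finite ℂ htfin, ?_⟩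
  haveI : FiniteDimensional ℂ (Submodule.span ℂ t) := FiniteDimensional.span_of_finite ℂ htfin
  haveI : CompleteSpace (Submodule.span ℂ t) := FiniteDimensional.complete ℂ _
  refine opNorm_le_of_norm_le_one _ hε.le fun x hx => ?_
  have hmem : Bc x ∈ closure (Bc '' Metric.closedBall 0 1) :=
    subset_closure ⟨x, by simpa [Metric.mem_closedBall, dist_zero_right] using hx, rfl⟩
  obtain ⟨y, hy, hxy⟩ := Set.mem_iUnion₂.mp (htsub hmem)
  rw [Metric.mem_ball] at hxy
  have hyE : y ∈ Submodule.span ℂ t := Submodule.subset_span hy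
  calc ‖(Bc - (Pr (Submodule.span ℂ t)).comp Bc) x‖
      = ‖Bc x - Pr (Submodule.span ℂ t) (Bc x)‖ := by
        simp [ContinuousLinearMap.sub_apply]
    _ ≤ ‖Bc x - y‖ := norm_sub_Pr_le_dist _ _ _ hyE
    _ ≤ ε := by rw [← dist_eq_norm]; exact hxy.le

lemma step_exists (B : ℕ → H →L[ℂ] H) (hcompact : ∀ i, IsCompactOperator (B i))
    (hstrong : ∀ x : H, Tendsto (fun i => B i x) atTop (𝓝 0))
    (hstrong' : ∀ x : H, Tendsto (fun i => (ContinuousLinearMap.adjoint (B i)) x) atTop (𝓝 0))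
    (M : ℝ) (hM : ∀ i, ‖B i‖ ≤ M)
    (p : ℕ) (U : Submodule ℂ H) (hU : FiniteDimensional ℂ U) {ε : ℝ} (hε : 0 < ε) :
    ∃ n : ℕ, ∃ U' : Submodule ℂ H, ∃ F : H →L[ℂ] H,
      p < n ∧ FiniteDimensional ℂ U' ∧ U ≤ U' ∧
      ‖B n - F‖ ≤ ε ∧ (∀ x ∈ U, F x = 0) ∧ (∀ x, F x ∈ Uᗮ) ∧ (∀ x, F x ∈ U') ∧
      (∀ x ∈ U'ᗮ, F x = 0) ∧ IsCompactOperator F := by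
  haveI := hU
  haveI : CompleteSpace U := FiniteDimensional.complete ℂ U
  have hε4 : 0 < ε / 4 := by positivity
  have hev1 : ∀ᶠ n in atTop, ‖(B n).comp (Pr U)‖ ≤ ε / 4 :=
    eventually_norm_comp_Pr_le B M hM hstrong U hε4
  have hev2 : ∀ᶠ n in atTop, ‖(Pr U).comp (B n)‖ ≤ ε / 4 := by
    have hMadj : ∀ n, ‖ContinuousLinearMap.adjoint (B n)‖ ≤ M := fun n => by
      rw [norm_adjoint_eq]; exact hM n
    have := eventually_norm_comp_Pr_le (fun n => ContinuousLinearMap.adjoint (B n)) M hMadj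
      hstrong' U hε4
    filter_upwards [this] with n hn
    rw [norm_Pr_comp]
    exact hn
  obtain ⟨n, ⟨hn1, hn2⟩, hnp⟩ := ((hev1.and hev2).and (eventually_gt_atTop p)).exists
  obtain ⟨E, hEfin, hEapprox⟩ := exists_findim_approx (B n) (hcompact n) hε4
  haveI := hEfin
  haveI : CompleteSpace E := FiniteDimensional.complete ℂ E
  set Q : H →L[ℂ] H := ContinuousLinearMap.id ℂ H - Pr U with hQdef
  have hQapp : ∀ y, Q y = y - Pr U y := fun y => by
    simp [hQdef, ContinuousLinearMap.sub_apply]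
  have hQnorm : ∀ x, ‖Q x‖ ≤ ‖x‖ := fun x => by
    rw [hQapp]; exact norm_sub_Pr_le U x
  have hQop : ‖Q‖ ≤ 1 := opNorm_le_of_norm_le_one Q zero_le_one fun x hx =>
    le_trans (hQnorm x) hx
  set G : H →L[ℂ] H := (Pr E).comp (B n) with hGdef
  set F : H →L[ℂ] H := (Q.comp (Pr E)).comp ((B n).comp Q) with hFdef
  have hFx : ∀ x, F x = Pr E ((B n) (Q x)) - Pr U (Pr E ((B n) (Q x))) := fun x => by
    show Q (Pr E ((B n) (Q x))) = _
    rw [hQapp]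
  set U' : Submodule ℂ H := (U ⊔ E) ⊔ (E.map (ContinuousLinearMap.adjoint (B n) : H →ₗ[ℂ] H))
    with hU'def
  haveI hU'fin : FiniteDimensional ℂ U' := by
    haveI : FiniteDimensional ℂ (E.map (ContinuousLinearMap.adjoint (B n) : H →ₗ[ℂ] H)) :=
      Module.Finite.map E _
    infer_instance
  have hUleU' : U ≤ U' := le_trans le_sup_left le_sup_left
  have hEleU' : E ≤ U' := le_trans le_sup_right le_sup_left
  have hMapleU' : (E.map (ContinuousLinearMap.adjoint (B n) : H →ₗ[ℂ] H)) ≤ U' := le_sup_right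
  refine ⟨n, U', F, hnp, hU'fin, hUleU', ?_, ?_, ?_, ?_, ?_, ?_⟩
  · -- norm estimate
    have hiden : B n - F = (Pr U).comp (B n) + Q.comp ((B n).comp (Pr U))
        + Q.comp ((B n - G).comp Q) := by
      ext x
      simp only [hFdef, hGdef, hQdef, ContinuousLinearMap.sub_apply,
        ContinuousLinearMap.add_apply, ContinuousLinearMap.comp_apply,
        ContinuousLinearMap.id_apply, map_sub]
      abel
    rw [hiden]
    have h1 : ‖Q.comp ((B n).comp (Pr U))‖ ≤ ε / 4 := by
      calc ‖Q.comp ((B n).comp (Pr U))‖ ≤ ‖Q‖ * ‖(B n).comp (Pr U)‖ :=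
            ContinuousLinearMap.opNorm_comp_le _ _
        _ ≤ 1 * (ε / 4) := mul_le_mul hQop hn1 (norm_nonneg _) zero_le_one
        _ = ε / 4 := one_mul _
    have h2 : ‖Q.comp ((B n - G).comp Q)‖ ≤ ε / 4 := by
      calc ‖Q.comp ((B n - G).comp Q)‖ ≤ ‖Q‖ * ‖(B n - G).comp Q‖ :=
            ContinuousLinearMap.opNorm_comp_le _ _
        _ ≤ 1 * ‖(B n - G).comp Q‖ :=
            mul_le_mul_of_nonneg_right hQop (norm_nonneg _)
        _ = ‖(B n - G).comp Q‖ := one_mul _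
        _ ≤ ‖B n - G‖ * ‖Q‖ := ContinuousLinearMap.opNorm_comp_le _ _
        _ ≤ (ε / 4) * 1 := mul_le_mul hEapprox hQop (norm_nonneg _) hε4.le
        _ = ε / 4 := mul_one _
    calc ‖(Pr U).comp (B n) + Q.comp ((B n).comp (Pr U)) + Q.comp ((B n - G).comp Q)‖
        ≤ ‖(Pr U).comp (B n) + Q.comp ((B n).comp (Pr U))‖ + ‖Q.comp ((B n - G).comp Q)‖ :=
          norm_add_le _ _
      _ ≤ (‖(Pr U).comp (B n)‖ + ‖Q.comp ((B n).comp (Pr U))‖) + ‖Q.comp ((B n - G).comp Q)‖ :=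
          add_le_add_left (norm_add_le _ _) _
      _ ≤ (ε / 4 + ε / 4) + ε / 4 := add_le_add (add_le_add hn2 h1) h2
      _ ≤ ε := by linarith
  · -- F vanishes on U
    intro x hx
    have hq : Q x = 0 := by rw [hQapp, Pr_eq_self U hx, sub_self]
    show Q (Pr E ((B n) (Q x))) = 0
    rw [hq]
    simp
  · -- range in Uᗮ
    intro x
    rw [hFx]
    exact sub_Pr_mem U _
  · -- range in U'
    intro x
    rw [hFx]
    exact Submodule.sub_mem U' (hEleU' (Pr_mem E _)) (hUleU' (Pr_mem U _))
  · -- vanishes on U'ᗮ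
    intro x hx
    have hxU : x ∈ Uᗮ := fun u hu => hx u (hUleU' hu)
    have hQx : Q x = x := by rw [hQapp, Pr_zero_of_mem_orth U hxU, sub_zero]
    have hBx : B n x ∈ Eᗮ := by
      intro e he
      have h0 : inner (𝕜 := ℂ) (ContinuousLinearMap.adjoint (B n) e) x = 0 :=
        hx _ (hMapleU' (Submodule.mem_map_of_mem he))
      rwa [ContinuousLinearMap.adjoint_inner_left] at h0
    have hPrE : Pr E (B n x) = 0 := Pr_zero_of_mem_orth E hBx
    show Q (Pr E ((B n) (Q x))) = 0
    rw [hQx, hPrE]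
    simp
  · -- compactness
    have h1 : IsCompactOperator (⇑(B n) ∘ ⇑Q) := (hcompact n).comp_clm Q
    have h2 : IsCompactOperator (⇑(Q.comp (Pr E)) ∘ (⇑(B n) ∘ ⇑Q)) := h1.clm_comp (Q.comp (Pr E))
    have hco : ⇑F = ⇑(Q.comp (Pr E)) ∘ (⇑(B n) ∘ ⇑Q) := by
      ext x; simp [hFdef, ContinuousLinearMap.comp_apply]
    rwa [hco]
lemma construction (B : ℕ → H →L[ℂ] H) (hcompact : ∀ i, IsCompactOperator (B i))
    (hstrong : ∀ x : H, Tendsto (fun i => B i x) atTop (𝓝 0))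
    (hstrong' : ∀ x : H, Tendsto (fun i => (ContinuousLinearMap.adjoint (B i)) x) atTop (𝓝 0))
    (M : ℝ) (hM : ∀ i, ‖B i‖ ≤ M) :
    ∃ (i : ℕ → ℕ) (Um : ℕ → Submodule ℂ H) (F : ℕ → H →L[ℂ] H),
      StrictMono i ∧ Um 0 = ⊥ ∧ (∀ m, FiniteDimensional ℂ (Um m)) ∧ (∀ m, Um m ≤ Um (m+1)) ∧
      (∀ m, ‖B (i m) - F m‖ ≤ (1/2 : ℝ)^m) ∧ (∀ m, ∀ x ∈ Um m, F m x = 0) ∧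
      (∀ m x, F m x ∈ (Um m)ᗮ) ∧ (∀ m x, F m x ∈ Um (m+1)) ∧
      (∀ m, ∀ x ∈ (Um (m+1))ᗮ, F m x = 0) ∧ (∀ m, IsCompactOperator (F m)) := by
  have hhalf : ∀ m : ℕ, (0:ℝ) < (1/2)^m := fun m => by positivity
  have hstep : ∀ (p : ℕ) (U : Submodule ℂ H), FiniteDimensional ℂ U → ∀ m : ℕ,
      ∃ n : ℕ, ∃ U' : Submodule ℂ H, ∃ F : H →L[ℂ] H,
      p < n ∧ FiniteDimensional ℂ U' ∧ U ≤ U' ∧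
      ‖B n - F‖ ≤ (1/2:ℝ)^m ∧ (∀ x ∈ U, F x = 0) ∧ (∀ x, F x ∈ Uᗮ) ∧ (∀ x, F x ∈ U') ∧
      (∀ x ∈ U'ᗮ, F x = 0) ∧ IsCompactOperator F := fun p U hU m =>
    step_exists B hcompact hstrong hstrong' M hM p U hU (hhalf m)
  choose nf Uf Ff hp hfin hle happrox hvan horth hran hvan' hcpt using hstep
  let St := ℕ × {V : Submodule ℂ H // FiniteDimensional ℂ V} × (H →L[ℂ] H)
  let step1 : St → ℕ → St := fun s m =>
    (nf s.1 s.2.1.1 s.2.1.2 m, ⟨Uf s.1 s.2.1.1 s.2.1.2 m, hfin s.1 s.2.1.1 s.2.1.2 m⟩,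
      Ff s.1 s.2.1.1 s.2.1.2 m)
  let chain : ℕ → St := fun m => Nat.rec ((0 : ℕ), ⟨⊥, inferInstance⟩, (0 : H →L[ℂ] H))
    (fun k ih => step1 ih k) m
  have hchain : ∀ m, chain (m+1) = step1 (chain m) m := fun m => rfl
  refine ⟨fun m => (chain (m+1)).1, fun m => (chain m).2.1.1, fun m => (chain (m+1)).2.2,
    ?_, rfl, fun m => (chain m).2.1.2, ?_, ?_, ?_, ?_, ?_, ?_, ?_⟩
  · refine strictMono_nat_of_lt_succ fun m => ?_
    exact hp (chain (m+1)).1 (chain (m+1)).2.1.1 (chain (m+1)).2.1.2 (m+1)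
  · exact fun m => hle (chain m).1 (chain m).2.1.1 (chain m).2.1.2 m
  · exact fun m => happrox (chain m).1 (chain m).2.1.1 (chain m).2.1.2 m
  · exact fun m => hvan (chain m).1 (chain m).2.1.1 (chain m).2.1.2 m
  · exact fun m => horth (chain m).1 (chain m).2.1.1 (chain m).2.1.2 m
  · exact fun m => hran (chain m).1 (chain m).2.1.1 (chain m).2.1.2 m
  · exact fun m => hvan' (chain m).1 (chain m).2.1.1 (chain m).2.1.2 m
  · exact fun m => hcpt (chain m).1 (chain m).2.1.1 (chain m).2.1.2 m
section Analysis

variable {Um : ℕ → Submodule ℂ H} {F : ℕ → H →L[ℂ] H}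

lemma hUle (hmono : ∀ m, Um m ≤ Um (m+1)) (k m : ℕ) (h : k ≤ m) : Um k ≤ Um m :=
  monotone_nat_of_le_succ hmono h

lemma F_eq_q (hfin : ∀ m, FiniteDimensional ℂ (Um m)) (hvan : ∀ m, ∀ x ∈ Um m, F m x = 0) (hvan' : ∀ m, ∀ x ∈ (Um (m+1))ᗮ, F m x = 0)
    (m : ℕ) (x : H) :
    F m x = F m (Pr (Um (m+1)) x - Pr (Um m) x) := by
  haveI := hfin m; haveI := hfin (m+1)
  haveI : CompleteSpace (Um m) := FiniteDimensional.complete ℂ _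
  haveI : CompleteSpace (Um (m+1)) := FiniteDimensional.complete ℂ _
  have hx : x = (x - Pr (Um (m+1)) x) + (Pr (Um (m+1)) x - Pr (Um m) x) + Pr (Um m) x := by abel
  calc F m x = F m ((x - Pr (Um (m+1)) x) + (Pr (Um (m+1)) x - Pr (Um m) x) + Pr (Um m) x) := by
        rw [← hx]
    _ = F m (x - Pr (Um (m+1)) x) + F m (Pr (Um (m+1)) x - Pr (Um m) x) + F m (Pr (Um m) x) := by
        rw [map_add, map_add]
    _ = 0 + F m (Pr (Um (m+1)) x - Pr (Um m) x) + 0 := by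
        rw [hvan' m _ (sub_Pr_mem _ x), hvan m _ (Pr_mem _ x)]
    _ = F m (Pr (Um (m+1)) x - Pr (Um m) x) := by abel

lemma F_kill_q (hfin : ∀ m, FiniteDimensional ℂ (Um m)) (hmono : ∀ m, Um m ≤ Um (m+1)) (hvan : ∀ m, ∀ x ∈ Um m, F m x = 0) (hvan' : ∀ m, ∀ x ∈ (Um (m+1))ᗮ, F m x = 0)
    (m k : ℕ) (x : H) (hkm : k ≠ m) :
    F k (Pr (Um (m+1)) x - Pr (Um m) x) = 0 := by
  haveI := hfin m; haveI := hfin (m+1)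
  haveI : CompleteSpace (Um m) := FiniteDimensional.complete ℂ _
  haveI : CompleteSpace (Um (m+1)) := FiniteDimensional.complete ℂ _
  rcases lt_or_gt_of_ne hkm with hlt | hgt
  · -- k < m : the vector is orthogonal to Um m ⊇ Um (k+1)
    have h1 : Pr (Um (m+1)) x - Pr (Um m) x ∈ (Um m)ᗮ := qdiff_mem_orth (hmono m) x
    have h2 : (Um m)ᗮ ≤ (Um (k+1))ᗮ := Submodule.orthogonal_le (hUle hmono (k+1) m hlt)
    exact hvan' k _ (h2 h1)
  · -- k > m : the vector lies in Um (m+1) ⊆ Um k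
    have h1 : Pr (Um (m+1)) x - Pr (Um m) x ∈ Um (m+1) :=
      Submodule.sub_mem _ (Pr_mem _ x) (hmono m (Pr_mem _ x))
    exact hvan k _ (hUle hmono (m+1) k hgt h1)

lemma F_pairwise_orth (hmono : ∀ m, Um m ≤ Um (m+1)) (horthF : ∀ m x, F m x ∈ (Um m)ᗮ) (hran : ∀ m x, F m x ∈ Um (m+1))
    (m k : ℕ) (x y : H) (hmk : m ≠ k) :
    inner (𝕜 := ℂ) (F m x) (F k y) = 0 := by
  rcases lt_or_gt_of_ne hmk with hlt | hgt
  · exact Submodule.inner_right_of_mem_orthogonal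
      (hUle hmono (m+1) k hlt (hran m x)) (horthF k y)
  · exact Submodule.inner_left_of_mem_orthogonal
      (hUle hmono (k+1) m hgt (hran k y)) (horthF m x)

lemma q_telescope (hfin : ∀ m, FiniteDimensional ℂ (Um m)) (hmono : ∀ m, Um m ≤ Um (m+1)) (N M : ℕ) (hNM : N ≤ M) (x : H) :
    ∑ m ∈ Finset.Ico N M, ‖Pr (Um (m+1)) x - Pr (Um m) x‖^2
      = ‖Pr (Um M) x‖^2 - ‖Pr (Um N) x‖^2 := by
  induction M, hNM using Nat.le_induction with
  | base => simp
  | succ M hNM ih =>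
    rw [Finset.sum_Ico_succ_top hNM, ih]
    haveI := hfin M; haveI := hfin (M+1)
    haveI : CompleteSpace (Um M) := FiniteDimensional.complete ℂ _
    haveI : CompleteSpace (Um (M+1)) := FiniteDimensional.complete ℂ _
    have := norm_sq_Pr_nested (hmono M) x
    linarith

lemma sum_est (hfin : ∀ m, FiniteDimensional ℂ (Um m)) (hmono : ∀ m, Um m ≤ Um (m+1)) (hvan : ∀ m, ∀ x ∈ Um m, F m x = 0) (hvan' : ∀ m, ∀ x ∈ (Um (m+1))ᗮ, F m x = 0)
    (horthF : ∀ m x, F m x ∈ (Um m)ᗮ) (hran : ∀ m x, F m x ∈ Um (m+1))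
    (c : ℝ) (hc : 0 ≤ c) (N M : ℕ) (hNM : N ≤ M) (hcb : ∀ m, N ≤ m → ‖F m‖ ≤ c) (x : H) :
    ‖∑ m ∈ Finset.Ico N M, F m x‖^2 ≤ c^2 * (‖Pr (Um M) x‖^2 - ‖Pr (Um N) x‖^2) := by
  have horth : ∀ m ∈ Finset.Ico N M, ∀ k ∈ Finset.Ico N M, m ≠ k →
      inner (𝕜 := ℂ) (F m x) (F k x) = 0 := fun m _ k _ hmk =>
    F_pairwise_orth hmono horthF hran m k x x hmk
  rw [norm_sq_sum_orth _ _ horth]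
  have hterm : ∀ m ∈ Finset.Ico N M, ‖F m x‖^2
      ≤ c^2 * ‖Pr (Um (m+1)) x - Pr (Um m) x‖^2 := by
    intro m hm
    rw [Finset.mem_Ico] at hm
    have h1 : ‖F m x‖ ≤ c * ‖Pr (Um (m+1)) x - Pr (Um m) x‖ := by
      rw [F_eq_q hfin hvan hvan' m x]
      exact le_trans ((F m).le_opNorm _)
        (mul_le_mul_of_nonneg_right (hcb m hm.1) (norm_nonneg _))
    calc ‖F m x‖^2 ≤ (c * ‖Pr (Um (m+1)) x - Pr (Um m) x‖)^2 := by
          exact pow_le_pow_left₀ (norm_nonneg _) h1 2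
      _ = c^2 * ‖Pr (Um (m+1)) x - Pr (Um m) x‖^2 := by ring
  calc ∑ m ∈ Finset.Ico N M, ‖F m x‖^2
      ≤ ∑ m ∈ Finset.Ico N M, c^2 * ‖Pr (Um (m+1)) x - Pr (Um m) x‖^2 :=
        Finset.sum_le_sum hterm
    _ = c^2 * ∑ m ∈ Finset.Ico N M, ‖Pr (Um (m+1)) x - Pr (Um m) x‖^2 := by
        rw [Finset.mul_sum]
    _ = c^2 * (‖Pr (Um M) x‖^2 - ‖Pr (Um N) x‖^2) := by
        rw [q_telescope hfin hmono N M hNM x]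

lemma proj_sq_mono (hfin : ∀ m, FiniteDimensional ℂ (Um m)) (hmono : ∀ m, Um m ≤ Um (m+1)) (m : ℕ) (x : H) :
    ‖Pr (Um m) x‖^2 ≤ ‖Pr (Um (m+1)) x‖^2 := by
  haveI := hfin m; haveI := hfin (m+1)
  haveI : CompleteSpace (Um m) := FiniteDimensional.complete ℂ _
  haveI : CompleteSpace (Um (m+1)) := FiniteDimensional.complete ℂ _
  have := norm_sq_Pr_nested (hmono m) x
  nlinarith [sq_nonneg ‖Pr (Um (m+1)) x - Pr (Um m) x‖]

lemma proj_sq_le (hfin : ∀ m, FiniteDimensional ℂ (Um m)) (m : ℕ) (x : H) : ‖Pr (Um m) x‖^2 ≤ ‖x‖^2 := by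
  haveI := hfin m
  haveI : CompleteSpace (Um m) := FiniteDimensional.complete ℂ _
  exact pow_le_pow_left₀ (norm_nonneg _) (Pr_norm_le _ x) 2

end Analysis
lemma le_of_sq_le_sq' {t u : ℝ} (h : t^2 ≤ u^2) (hu : 0 ≤ u) : t ≤ u := by
  nlinarith [sq_nonneg (t - u), sq_nonneg (t + u)]

lemma T_exists {Um : ℕ → Submodule ℂ H} {F : ℕ → H →L[ℂ] H}
    (hfin : ∀ m, FiniteDimensional ℂ (Um m)) (hmono : ∀ m, Um m ≤ Um (m+1))
    (hbot : Um 0 = ⊥)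
    (hvan : ∀ m, ∀ x ∈ Um m, F m x = 0) (hvan' : ∀ m, ∀ x ∈ (Um (m+1))ᗮ, F m x = 0)
    (horthF : ∀ m x, F m x ∈ (Um m)ᗮ) (hran : ∀ m x, F m x ∈ Um (m+1))
    (c₀ : ℝ) (hc0 : 0 ≤ c₀) (hb : ∀ m, ‖F m‖ ≤ c₀) :
    ∃ T : H →L[ℂ] H,
      (∀ x : H, Tendsto (fun N => ∑ m ∈ Finset.range N, F m x) atTop (𝓝 (T x))) ∧
      (∀ (N : ℕ) (c : ℝ), 0 ≤ c → (∀ m, N ≤ m → ‖F m‖ ≤ c) →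
        ‖T - ∑ m ∈ Finset.range N, F m‖ ≤ c) := by
  have ha0 : ∀ x : H, ‖Pr (Um 0) x‖^2 = 0 := by
    intro x
    rw [hbot, Pr_bot]
    simp
  -- partial sums are Cauchy
  have hIco : ∀ (N M : ℕ), N ≤ M → ∀ x : H, ∑ m ∈ Finset.range M, F m x -
      ∑ m ∈ Finset.range N, F m x = ∑ m ∈ Finset.Ico N M, F m x := by
    intro N M h x
    rw [Finset.sum_Ico_eq_sub _ h]
  have hseg : ∀ (N M : ℕ), N ≤ M → ∀ x : H,
      ‖∑ m ∈ Finset.Ico N M, F m x‖^2 ≤ c₀^2 * (‖Pr (Um M) x‖^2 - ‖Pr (Um N) x‖^2) :=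
    fun N M h x => sum_est hfin hmono hvan hvan' horthF hran c₀ hc0 N M h
      (fun m _ => hb m) x
  have hcauchy : ∀ x : H, CauchySeq (fun N => ∑ m ∈ Finset.range N, F m x) := by
    intro x
    set a : ℕ → ℝ := fun N => ‖Pr (Um N) x‖^2 with hadef
    have hamono : Monotone a := monotone_nat_of_le_succ fun m => proj_sq_mono hfin hmono m x
    have habdd : ∀ N, a N ≤ ‖x‖^2 := fun N => proj_sq_le hfin N x
    have hbddA : BddAbove (Set.range a) := ⟨‖x‖^2, by rintro r ⟨N, rfl⟩; exact habdd N⟩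
    set L : ℝ := ⨆ N, a N with hLdef
    have haL : Tendsto a atTop (𝓝 L) := tendsto_atTop_ciSup hamono hbddA
    have haLe : ∀ N, a N ≤ L := fun N => le_ciSup hbddA N
    set b : ℕ → ℝ := fun N => c₀ * Real.sqrt (L - a N) with hbdef
    have hbtend : Tendsto b atTop (𝓝 0) := by
      have h1 : Tendsto (fun N => L - a N) atTop (𝓝 0) := by
        have := (tendsto_const_nhds (x := L) (f := atTop (α := ℕ))).sub haL
        simpa using this
      have h2 : Tendsto (fun N => Real.sqrt (L - a N)) atTop (𝓝 0) := by
        have := (Real.continuous_sqrt.tendsto 0).comp h1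
        simpa [Function.comp_def] using this
      have := h2.const_mul c₀
      simpa using this
    refine cauchySeq_of_le_tendsto_0 b (fun n m N hn hm => ?_) hbtend
    wlog hnm : n ≤ m generalizing n m
    · rw [dist_comm]
      exact this m n hm hn (le_of_not_ge hnm)
    rw [dist_eq_norm, ← neg_sub, norm_neg, hIco n m hnm x]
    refine le_of_sq_le_sq' ?_ (by positivity)
    have h3 : ‖∑ k ∈ Finset.Ico n m, F k x‖^2 ≤ c₀^2 * (a m - a n) := hseg n m hnm x
    have h4 : a m - a n ≤ L - a N := by
      have := haLe m
      have := hamono hn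
      linarith
    calc ‖∑ k ∈ Finset.Ico n m, F k x‖^2 ≤ c₀^2 * (L - a N) := by nlinarith [sq_nonneg c₀]
      _ = (c₀ * Real.sqrt (L - a N))^2 := by
          rw [mul_pow, Real.sq_sqrt]
          have := haLe N
          linarith
  have hlim : ∀ x : H, ∃ y : H, Tendsto (fun N => ∑ m ∈ Finset.range N, F m x) atTop (𝓝 y) :=
    fun x => cauchySeq_tendsto_of_complete (hcauchy x)
  choose g hg using hlim
  have hgadd : ∀ x y : H, g (x + y) = g x + g y := by
    intro x y
    have h1 : Tendsto (fun N => ∑ m ∈ Finset.range N, F m (x + y)) atTop (𝓝 (g x + g y)) := by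
      have : (fun N => ∑ m ∈ Finset.range N, F m (x + y))
          = fun N => (∑ m ∈ Finset.range N, F m x) + (∑ m ∈ Finset.range N, F m y) := by
        funext N
        rw [← Finset.sum_add_distrib]
        exact Finset.sum_congr rfl fun m _ => map_add (F m) x y
      rw [this]
      exact (hg x).add (hg y)
    exact tendsto_nhds_unique (hg (x + y)) h1
  have hgsmul : ∀ (c : ℂ) (x : H), g (c • x) = c • g x := by
    intro c x
    have h1 : Tendsto (fun N => ∑ m ∈ Finset.range N, F m (c • x)) atTop (𝓝 (c • g x)) := by
      have : (fun N => ∑ m ∈ Finset.range N, F m (c • x))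
          = fun N => c • (∑ m ∈ Finset.range N, F m x) := by
        funext N
        rw [Finset.smul_sum]
        exact Finset.sum_congr rfl fun m _ => map_smul (F m) c x
      rw [this]
      exact (hg x).const_smul c
    exact tendsto_nhds_unique (hg (c • x)) h1
  have hgbound : ∀ x : H, ‖g x‖ ≤ c₀ * ‖x‖ := by
    intro x
    refine le_of_tendsto' (hg x).norm fun N => ?_
    have h1 : ∑ m ∈ Finset.range N, F m x = ∑ m ∈ Finset.Ico 0 N, F m x := by
      rw [Finset.range_eq_Ico]
    rw [h1]
    refine le_of_sq_le_sq' ?_ (by positivity)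
    have h2 := hseg 0 N (Nat.zero_le N) x
    have h3 := proj_sq_le hfin N x
    rw [ha0 x] at h2
    calc ‖∑ m ∈ Finset.Ico 0 N, F m x‖^2 ≤ c₀^2 * (‖Pr (Um N) x‖^2 - 0) := h2
      _ ≤ c₀^2 * ‖x‖^2 := by nlinarith [sq_nonneg c₀]
      _ = (c₀ * ‖x‖)^2 := by ring
  set T : H →L[ℂ] H := LinearMap.mkContinuous
    { toFun := g, map_add' := hgadd, map_smul' := hgsmul } c₀ hgbound with hTdef
  have hTapp : ∀ x, T x = g x := fun x => rfl
  refine ⟨T, fun x => by rw [hTapp]; exact hg x, ?_⟩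
  intro N c hc hcb
  refine (T - ∑ m ∈ Finset.range N, F m).opNorm_le_bound hc fun x => ?_
  have hsub : (T - ∑ m ∈ Finset.range N, F m) x = T x - ∑ m ∈ Finset.range N, F m x := by
    simp [ContinuousLinearMap.sub_apply]
  rw [hsub]
  have htendsub : Tendsto (fun M => ∑ m ∈ Finset.range M, F m x - ∑ m ∈ Finset.range N, F m x)
      atTop (𝓝 (T x - ∑ m ∈ Finset.range N, F m x)) := by
    rw [hTapp]
    exact (hg x).sub tendsto_const_nhds
  refine le_of_tendsto htendsub.norm ?_
  filter_upwards [eventually_ge_atTop N] with M hM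
  rw [hIco N M hM x]
  refine le_of_sq_le_sq' ?_ (by positivity)
  have h2 := sum_est hfin hmono hvan hvan' horthF hran c hc N M hM hcb x
  have h3 := proj_sq_le hfin M x
  have h4 : (0:ℝ) ≤ ‖Pr (Um N) x‖^2 := sq_nonneg _
  calc ‖∑ m ∈ Finset.Ico N M, F m x‖^2 ≤ c^2 * (‖Pr (Um M) x‖^2 - ‖Pr (Um N) x‖^2) := h2
    _ ≤ c^2 * ‖x‖^2 := by nlinarith [sq_nonneg c]
    _ = (c * ‖x‖)^2 := by ring
end Aux

theorem stmt12 {H : Type*} [NormedAddCommGroup H] [InnerProductSpace ℂ H] [CompleteSpace H]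
    (B : ℕ → H →L[ℂ] H) (hcompact : ∀ i, IsCompactOperator (B i))
    (hstrong : ∀ x : H, Tendsto (fun i => B i x) atTop (𝓝 0))
    (hstrong' : ∀ x : H, Tendsto (fun i => (ContinuousLinearMap.adjoint (B i)) x) atTop (𝓝 0))
    (ℓ : ℝ) (hnorm : Tendsto (fun i => ‖B i‖) atTop (𝓝 ℓ)) :
    ∃ i : ℕ → ℕ, StrictMono i ∧
      ∃ S : H →L[ℂ] H,
        (∀ x : H, Tendsto (fun N => ∑ m ∈ Finset.range N, B (i m) x) atTop (𝓝 (S x))) ∧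
        sInf {r : ℝ | ∃ K : H →L[ℂ] H, IsCompactOperator K ∧ r = ‖S + K‖} = ℓ := by
  classical
  -- global bound
  obtain ⟨M, hMub⟩ := hnorm.bddAbove_range
  have hM : ∀ n, ‖B n‖ ≤ M := fun n => hMub ⟨n, rfl⟩
  -- the construction
  obtain ⟨i, Um, F, hiSM, hbot, hfin, hmono, happrox, hvan, horthF, hran, hvan', hFcpt⟩ :=
    construction B hcompact hstrong hstrong' M hM
  have hℓ0 : (0:ℝ) ≤ ℓ := ge_of_tendsto' hnorm fun n => norm_nonneg _
  have hhalf0 : Tendsto (fun m : ℕ => (1/2:ℝ)^m) atTop (𝓝 0) :=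
    tendsto_pow_atTop_nhds_zero_of_lt_one (by norm_num) (by norm_num)
  have hBi : Tendsto (fun m => ‖B (i m)‖) atTop (𝓝 ℓ) := hnorm.comp hiSM.tendsto_atTop
  have hFnorm : Tendsto (fun m => ‖F m‖) atTop (𝓝 ℓ) := by
    have hdist : Tendsto (fun m => dist ‖B (i m)‖ ‖F m‖) atTop (𝓝 0) := by
      refine squeeze_zero (fun m => dist_nonneg) (fun m => ?_) hhalf0
      rw [Real.dist_eq]
      exact le_trans (abs_norm_sub_norm_le _ _) (happrox m)
    exact hBi.congr_dist hdist
  obtain ⟨c₀, hc₀ub⟩ := hFnorm.bddAbove_range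
  have hbF : ∀ m, ‖F m‖ ≤ c₀ := fun m => hc₀ub ⟨m, rfl⟩
  have hc00 : (0:ℝ) ≤ c₀ := le_trans (norm_nonneg _) (hbF 0)
  -- the operator T
  obtain ⟨T, hT, hTtail⟩ := T_exists hfin hmono hbot hvan hvan' horthF hran c₀ hc00 hbF
  -- the compact part C
  have hsummable : Summable (fun m => B (i m) - F m) := by
    refine Summable.of_norm_bounded (summable_geometric_of_lt_one
      (r := (1/2:ℝ)) (by norm_num) (by norm_num)) fun m => ?_
    exact happrox m
  have hCsum := hsummable.hasSum
  set C : H →L[ℂ] H := ∑' m, (B (i m) - F m) with hCdef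
  have hCtend : Tendsto (fun N => ∑ m ∈ Finset.range N, (B (i m) - F m)) atTop (𝓝 C) :=
    hCsum.tendsto_sum_nat
  have hTNcpt : ∀ N : ℕ, IsCompactOperator (⇑(∑ m ∈ Finset.range N, F m) : H → H) := by
    intro N
    induction N with
    | zero =>
      have hco : (⇑(∑ m ∈ Finset.range 0, F m) : H → H) = (0 : H → H) := by
        ext x; simp
      rw [hco]; exact isCompactOperator_zero
    | succ N ih =>
      have hco : (⇑(∑ m ∈ Finset.range (N+1), F m) : H → H)
          = (⇑(∑ m ∈ Finset.range N, F m) : H → H) + ⇑(F N) := by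
        ext x; simp [Finset.sum_range_succ]
      rw [hco]
      exact ih.add (hFcpt N)
  have hCcpt : IsCompactOperator C := by
    refine isCompactOperator_of_tendsto hCtend (Eventually.of_forall fun N => ?_)
    have h1 : ∀ N : ℕ, IsCompactOperator (⇑(∑ m ∈ Finset.range N, (B (i m) - F m)) : H → H) := by
      intro N
      induction N with
      | zero =>
        have hco : (⇑(∑ m ∈ Finset.range 0, (B (i m) - F m)) : H → H) = (0 : H → H) := by
          ext x; simp
        rw [hco]; exact isCompactOperator_zero
      | succ N ih =>
        have h2 : IsCompactOperator (⇑(B (i N)) - ⇑(F N) : H → H) :=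
          (hcompact (i N)).sub (hFcpt N)
        have hco : (⇑(∑ m ∈ Finset.range (N+1), (B (i m) - F m)) : H → H)
            = (⇑(∑ m ∈ Finset.range N, (B (i m) - F m)) : H → H)
              + (⇑(B (i N)) - ⇑(F N) : H → H) := by
          ext x; simp [Finset.sum_range_succ]; abel
        rw [hco]
        exact ih.add h2
    exact h1 N
  set S : H →L[ℂ] H := T + C with hSdef
  refine ⟨i, hiSM, S, ?_, ?_⟩
  · -- strong convergence of partial sums to S
    intro x
    have h1 : Tendsto (fun N => (∑ m ∈ Finset.range N, (B (i m) - F m)) x) atTop (𝓝 (C x)) :=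
      ((ContinuousLinearMap.apply ℂ H x).continuous.tendsto C).comp hCtend
    have h2 : Tendsto (fun N => ∑ m ∈ Finset.range N, F m x + (∑ m ∈ Finset.range N,
        (B (i m) - F m)) x) atTop (𝓝 (T x + C x)) := (hT x).add h1
    have h3 : (fun N => ∑ m ∈ Finset.range N, B (i m) x) = fun N =>
        ∑ m ∈ Finset.range N, F m x + (∑ m ∈ Finset.range N, (B (i m) - F m)) x := by
      funext N
      rw [ContinuousLinearMap.sum_apply]
      rw [← Finset.sum_add_distrib]
      refine Finset.sum_congr rfl fun m _ => ?_
      rw [ContinuousLinearMap.sub_apply]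
      abel
    rw [h3]
    have hSx : S x = T x + C x := rfl
    rw [hSx]
    exact h2
  · -- essential norm computation
    set A : Set ℝ := {r : ℝ | ∃ K : H →L[ℂ] H, IsCompactOperator K ∧ r = ‖S + K‖} with hAdef
    have hAne : A.Nonempty := ⟨‖S + 0‖, 0, by simpa using isCompactOperator_zero, rfl⟩
    have hAbdd : BddBelow A := ⟨0, by rintro r ⟨K, _, rfl⟩; exact norm_nonneg _⟩
    have hlower : ∀ r ∈ A, ℓ ≤ r := by
      rintro r ⟨K, hKcpt, rfl⟩
      set K' : H →L[ℂ] H := C + K with hK'def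
      have hK'cpt : IsCompactOperator K' := by
        have h0 := hCcpt.add hKcpt
        have hco : (⇑K' : H → H) = ⇑C + ⇑K := by ext x; simp [hK'def]
        rw [hco]; exact h0
      have hSK : S + K = T + K' := by rw [hSdef, hK'def]; abel
      rw [hSK]
      -- choose near-maximizing vectors
      have hx : ∀ m : ℕ, ∃ x : H, ‖x‖ ≤ 1 ∧ ‖F m‖ - (1/2:ℝ)^m ≤ ‖F m x‖ :=
        fun m => exists_norm_le_one_norm_ge (F m) (by positivity)
      choose xv hxv1 hxv2 using hx
      set y : ℕ → H := fun m => Pr (Um (m+1)) (xv m) - Pr (Um m) (xv m) with hydef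
      have hy1 : ∀ m, ‖y m‖ ≤ 1 := by
        intro m
        refine le_of_sq_le_sq' ?_ zero_le_one
        haveI := hfin m; haveI := hfin (m+1)
        haveI : CompleteSpace (Um m) := FiniteDimensional.complete ℂ _
        haveI : CompleteSpace (Um (m+1)) := FiniteDimensional.complete ℂ _
        have h1 := norm_sq_Pr_nested (hmono m) (xv m)
        have h2 := proj_sq_le hfin (m+1) (xv m)
        have h3 : ‖xv m‖^2 ≤ 1 := by
          have := hxv1 m
          nlinarith [norm_nonneg (xv m)]
        have h4 : (0:ℝ) ≤ ‖Pr (Um m) (xv m)‖^2 := sq_nonneg _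
        simp only [hydef]
        nlinarith
      have hTy : ∀ m, T (y m) = F m (xv m) := by
        intro m
        have hconst : ∀ᶠ N in atTop, ∑ k ∈ Finset.range N, F k (y m) = F m (xv m) := by
          filter_upwards [eventually_ge_atTop (m+1)] with N hN
          have h1 : ∀ k ∈ Finset.range N, k ≠ m → F k (y m) = 0 := by
            intro k _ hk
            exact F_kill_q hfin hmono hvan hvan' m k (xv m) hk
          rw [Finset.sum_eq_single_of_mem m (Finset.mem_range.2 (Nat.lt_of_lt_of_le (Nat.lt_succ_self m) hN)) h1]
          rw [hydef]
          exact (F_eq_q hfin hvan hvan' m (xv m)).symm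
        have h2 : Tendsto (fun N => ∑ k ∈ Finset.range N, F k (y m)) atTop (𝓝 (F m (xv m))) :=
          Tendsto.congr' (EventuallyEq.symm hconst) tendsto_const_nhds
        exact tendsto_nhds_unique (hT (y m)) h2
      have hweak : ∀ z : H, Tendsto (fun m => (inner ℂ (y m) z : ℂ)) atTop (𝓝 0) := by
        intro z
        have hinner : ∀ m, (inner ℂ (y m) z : ℂ)
            = inner ℂ (xv m) (Pr (Um (m+1)) z - Pr (Um m) z) := by
          intro m
          haveI := hfin m; haveI := hfin (m+1)
          haveI : CompleteSpace (Um m) := FiniteDimensional.complete ℂ _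
          haveI : CompleteSpace (Um (m+1)) := FiniteDimensional.complete ℂ _
          rw [hydef]
          simp only [inner_sub_left, inner_sub_right]
          rw [Pr_symm (Um (m+1)) (xv m) z, Pr_symm (Um m) (xv m) z]
        -- the "Bessel" convergence of the projections applied to z
        set a : ℕ → ℝ := fun N => ‖Pr (Um N) z‖^2 with hadef
        have hamono : Monotone a := monotone_nat_of_le_succ fun m => proj_sq_mono hfin hmono m z
        have hbddA : BddAbove (Set.range a) :=
          ⟨‖z‖^2, by rintro r ⟨N, rfl⟩; exact proj_sq_le hfin N z⟩
        have haL : Tendsto a atTop (𝓝 (⨆ N, a N)) := tendsto_atTop_ciSup hamono hbddA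
        have hdiff : Tendsto (fun m => a (m+1) - a m) atTop (𝓝 0) := by
          have h1 : Tendsto (fun m => a (m+1)) atTop (𝓝 (⨆ N, a N)) :=
            haL.comp (tendsto_add_atTop_nat 1)
          have := h1.sub haL
          simpa using this
        have hqz : Tendsto (fun m => ‖Pr (Um (m+1)) z - Pr (Um m) z‖) atTop (𝓝 0) := by
          have hsq : ∀ m, ‖Pr (Um (m+1)) z - Pr (Um m) z‖ = Real.sqrt (a (m+1) - a m) := by
            intro m
            haveI := hfin m; haveI := hfin (m+1)
            haveI : CompleteSpace (Um m) := FiniteDimensional.complete ℂ _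
            haveI : CompleteSpace (Um (m+1)) := FiniteDimensional.complete ℂ _
            have h1 := norm_sq_Pr_nested (hmono m) z
            have h2 : a (m+1) - a m = ‖Pr (Um (m+1)) z - Pr (Um m) z‖^2 := by
              simp only [hadef]; linarith
            rw [h2, Real.sqrt_sq (norm_nonneg _)]
          have h3 : Tendsto (fun m => Real.sqrt (a (m+1) - a m)) atTop (𝓝 0) := by
            have := (Real.continuous_sqrt.tendsto 0).comp hdiff
            simpa [Function.comp_def] using this
          exact h3.congr fun m => (hsq m).symm
        refine squeeze_zero_norm (fun m => ?_) hqz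
        rw [hinner m]
        calc ‖(inner ℂ (xv m) (Pr (Um (m+1)) z - Pr (Um m) z) : ℂ)‖
            ≤ ‖xv m‖ * ‖Pr (Um (m+1)) z - Pr (Um m) z‖ := norm_inner_le_norm _ _
          _ ≤ 1 * ‖Pr (Um (m+1)) z - Pr (Um m) z‖ :=
              mul_le_mul_of_nonneg_right (hxv1 m) (norm_nonneg _)
          _ = ‖Pr (Um (m+1)) z - Pr (Um m) z‖ := one_mul _
      have hKy : Tendsto (fun m => ‖K' (y m)‖) atTop (𝓝 0) :=
        compact_weak_null K' hK'cpt y hy1 hweak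
      have hineq : ∀ m, ‖F m‖ - (1/2:ℝ)^m - ‖K' (y m)‖ ≤ ‖T + K'‖ := by
        intro m
        have h1 : ‖(T + K') (y m)‖ ≤ ‖T + K'‖ := by
          calc ‖(T + K') (y m)‖ ≤ ‖T + K'‖ * ‖y m‖ := (T + K').le_opNorm _
            _ ≤ ‖T + K'‖ * 1 := mul_le_mul_of_nonneg_left (hy1 m) (norm_nonneg _)
            _ = ‖T + K'‖ := mul_one _
        have h2 : ‖F m (xv m)‖ - ‖K' (y m)‖ ≤ ‖(T + K') (y m)‖ := by
          have h3 : (T + K') (y m) = F m (xv m) + K' (y m) := by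
            rw [ContinuousLinearMap.add_apply, hTy m]
          rw [h3]
          have h5 : ‖F m (xv m)‖ ≤ ‖F m (xv m) + K' (y m)‖ + ‖K' (y m)‖ := by
            have := norm_add_le (F m (xv m) + K' (y m)) (-(K' (y m)))
            simpa using this
          linarith
        have h4 := hxv2 m
        linarith
      have hlim : Tendsto (fun m => ‖F m‖ - (1/2:ℝ)^m - ‖K' (y m)‖) atTop (𝓝 ℓ) := by
        have := (hFnorm.sub hhalf0).sub hKy
        simpa using this
      exact le_of_tendsto hlim (Eventually.of_forall hineq)
    refine le_antisymm ?_ (le_csInf hAne hlower)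
    refine le_of_forall_pos_le_add fun ε hε => ?_
    obtain ⟨N, hN⟩ := (hFnorm.eventually
      (eventually_le_nhds (lt_add_of_pos_right ℓ hε))).exists_forall_of_atTop
    have hKN : IsCompactOperator (-(C + ∑ m ∈ Finset.range N, F m)) := by
      have h1 := (hCcpt.add (hTNcpt N)).neg
      have hco : (⇑(-(C + ∑ m ∈ Finset.range N, F m)) : H → H)
          = -(⇑C + (⇑(∑ m ∈ Finset.range N, F m) : H → H)) := by
        ext x; simp
      rw [hco]; exact h1
    have hmemA : ‖T - ∑ m ∈ Finset.range N, F m‖ ∈ A := by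
      refine ⟨-(C + ∑ m ∈ Finset.range N, F m), hKN, ?_⟩
      have : S + -(C + ∑ m ∈ Finset.range N, F m) = T - ∑ m ∈ Finset.range N, F m := by
        rw [hSdef]; abel
      rw [this]
    calc sInf A ≤ ‖T - ∑ m ∈ Finset.range N, F m‖ := csInf_le hAbdd hmemA
      _ ≤ ℓ + ε := hTtail N (ℓ + ε) (by linarith) fun m hm => hN m hm
end
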